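/- arXiv:2209.01449 — 6 statements merged into one kernel-verified Lean document; each statement's English description precedes it below -/
import Mathlib

section
/- Fix integers d ≥ 2, n ≥ 1 and 0 ≤ k ≤ n. The set of all matrices M ∈ Sp(2n, Z_d) which, with respect to the partition of the row and column indices {1,…,2n} into four consecutive blocks of sizes (n−k, k, n−k, k), have the block form M = [[(Aᵀ)⁻¹, 0, 0, 0], [M₂₁, M₂₂, 0, M₂₄], [M₃₁, M₃₂, A, M₃₄], [M₄₁, M₄₂, 0, M₄₄]] for some invertible (n−k)×(n−k) matrix A over Z_d, is a subgroup of Sp(2n, Z_d): it contains the identity matrix and is closed under matrix multiplication and under taking inverses. -/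
/-!
Since `Λ = -J` for Mathlib's `J`, the set `Sp(2n, Z_d)` is Mathlib's `symplecticGroup`, so it is
closed under products and inverses, and the inverse of a symplectic `M = [[P, Q], [S, T]]` is
`-J Mᵀ J = [[Tᵀ, -Qᵀ], [-Sᵀ, Pᵀ]]`. Both operations preserve the zero pattern of the block form:
a product multiplies the diagonal blocks `A`, and the inverse trades `A` for `A⁻¹`, whose
companion block `((A⁻¹)ᵀ)⁻¹ = Aᵀ` is exactly the top-left block of `Tᵀ`.
-/

open Matrix

/-- The standard symplectic form `Λ = [[0, I], [-I, 0]]` over `ZMod d`. -/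
def JJ (ι : Type) [Fintype ι] [DecidableEq ι] (d : ℕ) :
    Matrix (ι ⊕ ι) (ι ⊕ ι) (ZMod d) :=
  Matrix.fromBlocks 0 1 (-1) 0

/-- The set of symplectic matrices: `Mᵀ Λ M = Λ`. -/
def SpSet (ι : Type) [Fintype ι] [DecidableEq ι] (d : ℕ) :
    Set (Matrix (ι ⊕ ι) (ι ⊕ ι) (ZMod d)) :=
  {M | Mᵀ * JJ ι d * M = JJ ι d}

/-- Index of a block of size `n - k`. -/
abbrev BF (n k : ℕ) := Fin (n - k)
/-- Index of a block of size `k`. -/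
abbrev BK (k : ℕ) := Fin k
/-- Half of the row/column index set, partitioned into blocks of sizes `n-k` and `k`. -/
abbrev HalfIx (n k : ℕ) := BF n k ⊕ BK k
/-- The full row/column index set `{1, …, 2n}`, partitioned into four consecutive
blocks of sizes `(n-k, k, n-k, k)`. -/
abbrev FullIx (n k : ℕ) := HalfIx n k ⊕ HalfIx n k

/-- `M` has the block form `[[(Aᵀ)⁻¹,0,0,0],[M₂₁,M₂₂,0,M₂₄],[M₃₁,M₃₂,A,M₃₄],[M₄₁,M₄₂,0,M₄₄]]`
with respect to the partition into blocks of sizes `(n-k, k, n-k, k)`, for some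
invertible `(n-k)×(n-k)` matrix `A` over `Z_d`. -/
def HasBlockForm (n k d : ℕ) (M : Matrix (FullIx n k) (FullIx n k) (ZMod d)) : Prop :=
  ∃ A : Matrix (BF n k) (BF n k) (ZMod d), IsUnit A ∧
  ∃ (M21 : Matrix (BK k) (BF n k) (ZMod d)) (M22 M24 : Matrix (BK k) (BK k) (ZMod d))
    (M31 : Matrix (BF n k) (BF n k) (ZMod d)) (M32 M34 : Matrix (BF n k) (BK k) (ZMod d))
    (M41 : Matrix (BK k) (BF n k) (ZMod d)) (M42 M44 : Matrix (BK k) (BK k) (ZMod d)),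
    M = Matrix.fromBlocks
          (Matrix.fromBlocks (Aᵀ)⁻¹ 0 M21 M22) (Matrix.fromBlocks 0 0 0 M24)
          (Matrix.fromBlocks M31 M32 M41 M42) (Matrix.fromBlocks A M34 0 M44)

/-- The set of symplectic matrices with the block form of the trivial `[[n,k]]_d` code. -/
def Tset (n k d : ℕ) : Set (Matrix (FullIx n k) (FullIx n k) (ZMod d)) :=
  {M | M ∈ SpSet (HalfIx n k) d ∧ HasBlockForm n k d M}

lemma JJ_eq_neg_J (ι : Type) [Fintype ι] [DecidableEq ι] (d : ℕ) :
    JJ ι d = -J ι (ZMod d) := by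
  simp [JJ, J, fromBlocks_neg]

lemma SpSet_eq_symplecticGroup (ι : Type) [Fintype ι] [DecidableEq ι] (d : ℕ) :
    SpSet ι d = symplecticGroup ι (ZMod d) := by
  ext M
  simp [SpSet, JJ_eq_neg_J, SymplecticGroup.mem_iff']

namespace SymplecticGroup

variable {l R : Type*} [Fintype l] [DecidableEq l] [CommRing R]

theorem inv_mem {M : Matrix (l ⊕ l) (l ⊕ l) R} (hM : M ∈ symplecticGroup l R) :
    M⁻¹ ∈ symplecticGroup l R := by
  simpa [coe_inv'] using (⟨M, hM⟩⁻¹ : symplecticGroup l R).2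

theorem neg_J_mul_fromBlocks_transpose_mul_J (P Q S T : Matrix l l R) :
    -J l R * (fromBlocks P Q S T)ᵀ * J l R = fromBlocks Tᵀ (-Qᵀ) (-Sᵀ) Pᵀ := by
  simp [J, fromBlocks_transpose, fromBlocks_multiply, fromBlocks_neg]

end SymplecticGroup

lemma hasBlockForm_one (n k d : ℕ) : HasBlockForm n k d 1 :=
  ⟨1, isUnit_one, 0, 1, 0, 0, 0, 0, 0, 0, 1, by
    rw [← fromBlocks_one (l := HalfIx n k), ← fromBlocks_one (l := BF n k) (m := BK k)]
    simp [fromBlocks_zero]⟩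

lemma HasBlockForm.mul {n k d : ℕ} {M N : Matrix (FullIx n k) (FullIx n k) (ZMod d)}
    (hM : HasBlockForm n k d M) (hN : HasBlockForm n k d N) : HasBlockForm n k d (M * N) := by
  obtain ⟨A, hA, M21, M22, M24, M31, M32, M34, M41, M42, M44, rfl⟩ := hM
  obtain ⟨A', hA', N21, N22, N24, N31, N32, N34, N41, N42, N44, rfl⟩ := hN
  refine ⟨A * A', hA.mul hA',
    M21 * (A'ᵀ)⁻¹ + M22 * N21 + M24 * N41, M22 * N22 + M24 * N42, M22 * N24 + M24 * N44,
    M31 * (A'ᵀ)⁻¹ + M32 * N21 + (A * N31 + M34 * N41), M32 * N22 + (A * N32 + M34 * N42),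
    M32 * N24 + (A * N34 + M34 * N44),
    M41 * (A'ᵀ)⁻¹ + M42 * N21 + M44 * N41, M42 * N22 + M44 * N42, M42 * N24 + M44 * N44, ?_⟩
  simp only [fromBlocks_multiply, fromBlocks_add, transpose_mul, Matrix.mul_inv_rev,
    Matrix.zero_mul, Matrix.mul_zero, add_zero, zero_add]

lemma HasBlockForm.symplecticInv {n k d : ℕ} {M : Matrix (FullIx n k) (FullIx n k) (ZMod d)}
    (hM : HasBlockForm n k d M) :
    HasBlockForm n k d (-J (HalfIx n k) (ZMod d) * Mᵀ * J (HalfIx n k) (ZMod d)) := by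
  obtain ⟨A, hA, M21, M22, M24, M31, M32, M34, M41, M42, M44, rfl⟩ := hM
  have hAT : IsUnit Aᵀ.det := by rwa [det_transpose, ← isUnit_iff_isUnit_det]
  refine ⟨A⁻¹, isUnit_nonsing_inv_iff.2 hA,
    M34ᵀ, M44ᵀ, -M24ᵀ, -M31ᵀ, -M41ᵀ, M21ᵀ, -M32ᵀ, -M42ᵀ, M22ᵀ, ?_⟩
  rw [SymplecticGroup.neg_J_mul_fromBlocks_transpose_mul_J]
  simp [fromBlocks_transpose, fromBlocks_neg, transpose_nonsing_inv, nonsing_inv_nonsing_inv _ hAT]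

theorem stmt_0_general (d n k : ℕ) :
    (1 : Matrix (FullIx n k) (FullIx n k) (ZMod d)) ∈ Tset n k d ∧
    (∀ M N : Matrix (FullIx n k) (FullIx n k) (ZMod d),
      M ∈ Tset n k d → N ∈ Tset n k d → M * N ∈ Tset n k d) ∧
    (∀ M : Matrix (FullIx n k) (FullIx n k) (ZMod d), M ∈ Tset n k d → M⁻¹ ∈ Tset n k d) := by
  simp only [Tset, SpSet_eq_symplecticGroup, Set.mem_ofPred_eq, SetLike.mem_coe]
  refine ⟨⟨one_mem _, hasBlockForm_one n k d⟩, fun M N hM hN ↦ ⟨mul_mem hM.1 hN.1, hM.2.mul hN.2⟩,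
    fun M hM ↦ ⟨SymplecticGroup.inv_mem hM.1, ?_⟩⟩
  rw [SymplecticGroup.inv_eq_symplectic_inv M hM.1]
  exact hM.2.symplecticInv

theorem stmt_0 (d n k : ℕ) (hd : 2 ≤ d) (hn : 1 ≤ n) (hkn : k ≤ n) :
    (1 : Matrix (FullIx n k) (FullIx n k) (ZMod d)) ∈ Tset n k d ∧
    (∀ M N : Matrix (FullIx n k) (FullIx n k) (ZMod d),
      M ∈ Tset n k d → N ∈ Tset n k d → M * N ∈ Tset n k d) ∧
    (∀ M : Matrix (FullIx n k) (FullIx n k) (ZMod d), M ∈ Tset n k d → M⁻¹ ∈ Tset n k d) :=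
  stmt_0_general d n k
end

section
/- Let p be a prime number and m ≥ 2, n ≥ 1 integers. The set of matrices M ∈ Sp(2n, Z_{p^m}) whose entrywise reduction modulo p^{m−1} equals the 2n×2n identity matrix has cardinality exactly p^{2n² + n}. -/
open Matrix

/-! ### Elementwise lemmas about `ZMod (p ^ m)` -/

section elt
variable {p m : ℕ}

lemma aux_pm1_mul_p (hm : 2 ≤ m) : (p : ZMod (p^m))^(m-1) * p = 0 := by
  rw [← pow_succ]
  have h : m - 1 + 1 = m := by omega
  rw [h]
  have := ZMod.natCast_self (p^m)
  push_cast at this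
  exact this

lemma aux_L1 (hp : p.Prime) (hm : 2 ≤ m) (x : ZMod (p^m)) :
    (p : ZMod (p^m))^(m-1) *
        (((ZMod.castHom (dvd_pow_self p (by omega : m ≠ 0)) (ZMod p)) x).val : ZMod (p^m))
      = (p : ZMod (p^m))^(m-1) * x := by
  haveI : NeZero (p^m) := ⟨pow_ne_zero m hp.pos.ne'⟩
  haveI : NeZero p := ⟨hp.pos.ne'⟩
  set π := ZMod.castHom (dvd_pow_self p (by omega : m ≠ 0)) (ZMod p)
  have hx : ((x.val : ℕ) : ZMod (p^m)) = x := by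
    rw [ZMod.natCast_val, ZMod.cast_id]
  have hπ : π x = ((x.val : ℕ) : ZMod p) := by rw [← hx, map_natCast]; rw [hx]
  have hval : (π x).val = x.val % p := by rw [hπ, ZMod.val_natCast]
  rw [hval]
  conv_rhs => rw [← hx]
  have hdiv : x.val = p * (x.val / p) + x.val % p := (Nat.div_add_mod x.val p).symm
  calc (p : ZMod (p^m))^(m-1) * ((x.val % p : ℕ) : ZMod (p^m))
      = ((p : ZMod (p^m))^(m-1) * p) * ((x.val / p : ℕ) : ZMod (p^m))
          + (p : ZMod (p^m))^(m-1) * ((x.val % p : ℕ) : ZMod (p^m)) := by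
        rw [aux_pm1_mul_p hm]; ring
    _ = (p : ZMod (p^m))^(m-1) * ((x.val : ℕ) : ZMod (p^m)) := by
        conv_rhs => rw [hdiv]
        push_cast
        ring

lemma aux_L2 (hp : p.Prime) (hm : 2 ≤ m) (a : ZMod p) :
    (p : ZMod (p^m))^(m-1) * (a.val : ZMod (p^m)) = 0 → a = 0 := by
  intro h
  haveI : NeZero p := ⟨hp.pos.ne'⟩
  have h2 : ((p^(m-1) * a.val : ℕ) : ZMod (p^m)) = 0 := by push_cast; exact h
  rw [ZMod.natCast_eq_zero_iff] at h2
  have hpm : p^m = p^(m-1) * p := by rw [← pow_succ]; congr 1; omega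
  rw [hpm] at h2
  have hdvd : p ∣ a.val := (mul_dvd_mul_iff_left (pow_ne_zero (m-1) hp.pos.ne')).mp h2
  have hlt : a.val < p := ZMod.val_lt a
  have hz : a.val = 0 := Nat.eq_zero_of_dvd_of_lt hdvd hlt
  exact (ZMod.val_eq_zero a).mp hz

lemma aux_Kiff (hp : p.Prime) (hm : 2 ≤ m) (x y : ZMod (p^m)) :
    (p : ZMod (p^m))^(m-1) * x = (p : ZMod (p^m))^(m-1) * y ↔
      (ZMod.castHom (dvd_pow_self p (by omega : m ≠ 0)) (ZMod p)) x
        = (ZMod.castHom (dvd_pow_self p (by omega : m ≠ 0)) (ZMod p)) y := by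
  set π := ZMod.castHom (dvd_pow_self p (by omega : m ≠ 0)) (ZMod p)
  constructor
  · intro h
    have h' : (p : ZMod (p^m))^(m-1) * ((π (x - y)).val : ZMod (p^m)) = 0 := by
      rw [aux_L1 hp hm, mul_sub, h, sub_self]
    have := aux_L2 hp hm _ h'
    rw [map_sub, sub_eq_zero] at this
    exact this
  · intro h
    rw [← aux_L1 hp hm x, ← aux_L1 hp hm y, h]

lemma aux_Kzero (hp : p.Prime) (hm : 2 ≤ m) (x : ZMod (p^m)) :
    (p : ZMod (p^m))^(m-1) * x = 0 ↔
      (ZMod.castHom (dvd_pow_self p (by omega : m ≠ 0)) (ZMod p)) x = 0 := by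
  have := aux_Kiff hp hm x 0
  rw [mul_zero, map_zero] at this
  exact this

lemma aux_L3 (hp : p.Prime) (hm : 2 ≤ m) (x : ZMod (p^m))
    (h : (ZMod.castHom (pow_dvd_pow p (Nat.sub_le m 1)) (ZMod (p ^ (m - 1)))) x = 0) :
    ∃ y, x = (p : ZMod (p^m))^(m-1) * y := by
  haveI : NeZero (p^m) := ⟨pow_ne_zero m hp.pos.ne'⟩
  have hx : ((x.val : ℕ) : ZMod (p^m)) = x := by
    rw [ZMod.natCast_val, ZMod.cast_id]
  have h2 : ((x.val : ℕ) : ZMod (p^(m-1))) = 0 := by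
    rw [← h, ← hx, map_natCast, hx]
  rw [ZMod.natCast_eq_zero_iff] at h2
  obtain ⟨k, hk⟩ := h2
  exact ⟨(k : ZMod (p^m)), by rw [← hx, hk]; push_cast; ring⟩

lemma aux_pm1_sq (hm : 2 ≤ m) :
    ((p : ZMod (p^m))^(m-1)) * ((p : ZMod (p^m))^(m-1)) = 0 := by
  rw [← pow_add]
  have h : (m-1) + (m-1) = m + (m-2) := by omega
  rw [h, pow_add]
  have hz : (p : ZMod (p^m))^m = 0 := by
    have := ZMod.natCast_self (p^m); push_cast at this; exact this
  rw [hz, zero_mul]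

lemma aux_pi_w (hp : p.Prime) (hm : 2 ≤ m) (a : ZMod p) :
    (ZMod.castHom (dvd_pow_self p (by omega : m ≠ 0)) (ZMod p))
      ((a.val : ℕ) : ZMod (p^m)) = a := by
  haveI : NeZero p := ⟨hp.pos.ne'⟩
  rw [map_natCast, ZMod.natCast_val, ZMod.cast_id]

end elt

/-! ### Matrix lemmas -/

section mat
variable {ι : Type} [Fintype ι] [DecidableEq ι] {p m : ℕ}

lemma JJ_map (d e : ℕ) (f : ZMod d →+* ZMod e) : (JJ ι d).map f = JJ ι e := by
  ext i j
  cases i <;> cases j <;>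
    simp [JJ, Matrix.fromBlocks, Matrix.map_apply, Matrix.one_apply, apply_ite f]

lemma JJ_transpose (d : ℕ) : (JJ ι d)ᵀ = -(JJ ι d) := by
  simp [JJ, Matrix.fromBlocks_transpose]
  ext i j
  cases i <;> cases j <;> simp [Matrix.fromBlocks]

lemma JJ_mul_JJ (d : ℕ) : JJ ι d * JJ ι d = -1 := by
  simp [JJ, Matrix.fromBlocks_multiply]
  ext i j
  cases i <;> cases j <;> simp [Matrix.fromBlocks, Matrix.one_apply]

lemma aux_expand (s : ZMod (p^m)) (hs : s * s = 0)
    (C J : Matrix (ι ⊕ ι) (ι ⊕ ι) (ZMod (p^m))) :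
    (1 + s • C)ᵀ * J * (1 + s • C) = J + s • (Cᵀ * J + J * C) := by
  rw [Matrix.transpose_add, Matrix.transpose_one, Matrix.transpose_smul]
  simp only [Matrix.add_mul, Matrix.mul_add, Matrix.smul_mul, Matrix.mul_smul, smul_smul,
    hs, zero_smul, Matrix.one_mul, Matrix.mul_one, smul_add, add_zero]
  abel

lemma aux_smul_eq_zero_iff (hp : p.Prime) (hm : 2 ≤ m)
    (D : Matrix (ι ⊕ ι) (ι ⊕ ι) (ZMod (p^m))) :
    (p : ZMod (p^m))^(m-1) • D = 0 ↔
      D.map (ZMod.castHom (dvd_pow_self p (by omega : m ≠ 0)) (ZMod p)) = 0 := by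
  rw [← Matrix.ext_iff, ← Matrix.ext_iff]
  simp only [Matrix.smul_apply, Matrix.zero_apply, Matrix.map_apply, smul_eq_mul]
  exact forall_congr' fun i => forall_congr' fun j => aux_Kzero hp hm (D i j)

lemma aux_map_addmul {d e : ℕ} (f : ZMod d →+* ZMod e)
    (C J : Matrix (ι ⊕ ι) (ι ⊕ ι) (ZMod d)) :
    (Cᵀ * J + J * C).map f = (C.map f)ᵀ * J.map f + J.map f * (C.map f) := by
  rw [Matrix.map_add _ (fun a b => map_add f a b), Matrix.map_mul, Matrix.map_mul,
    Matrix.transpose_map]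

lemma aux_sympl_iff (hp : p.Prime) (hm : 2 ≤ m)
    (C : Matrix (ι ⊕ ι) (ι ⊕ ι) (ZMod (p^m))) :
    (1 + (p : ZMod (p^m))^(m-1) • C) ∈ SpSet ι (p^m) ↔
      (C.map (ZMod.castHom (dvd_pow_self p (by omega : m ≠ 0)) (ZMod p)))ᵀ * JJ ι p
        + JJ ι p * (C.map (ZMod.castHom (dvd_pow_self p (by omega : m ≠ 0)) (ZMod p))) = 0 := by
  set π := ZMod.castHom (dvd_pow_self p (by omega : m ≠ 0)) (ZMod p)
  show (1 + (p : ZMod (p^m))^(m-1) • C)ᵀ * JJ ι (p^m) * (1 + (p : ZMod (p^m))^(m-1) • C)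
      = JJ ι (p^m) ↔ _
  rw [aux_expand _ (aux_pm1_sq hm), add_eq_left, aux_smul_eq_zero_iff hp hm,
    aux_map_addmul π, JJ_map]

end mat

/-! ### Counting symmetric matrices -/

section count
variable (ι : Type) [Fintype ι] [DecidableEq ι]

def condSet (d : ℕ) := {A : Matrix (ι ⊕ ι) (ι ⊕ ι) (ZMod d) // Aᵀ * JJ ι d + JJ ι d * A = 0}

lemma cond_iff_symm (d : ℕ) (A : Matrix (ι ⊕ ι) (ι ⊕ ι) (ZMod d)) :
    Aᵀ * JJ ι d + JJ ι d * A = 0 ↔ (JJ ι d * A).IsSymm := by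
  unfold Matrix.IsSymm
  rw [Matrix.transpose_mul, JJ_transpose, Matrix.mul_neg, neg_eq_iff_add_eq_zero]

def mulJJEquiv (d : ℕ) : Matrix (ι ⊕ ι) (ι ⊕ ι) (ZMod d) ≃ Matrix (ι ⊕ ι) (ι ⊕ ι) (ZMod d) where
  toFun A := JJ ι d * A
  invFun S := -(JJ ι d * S)
  left_inv A := by
    show -(JJ ι d * (JJ ι d * A)) = A
    rw [← Matrix.mul_assoc, JJ_mul_JJ]; simp
  right_inv S := by
    show JJ ι d * -(JJ ι d * S) = S
    rw [Matrix.mul_neg, ← Matrix.mul_assoc, JJ_mul_JJ]; simp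

def condEquivSymm (d : ℕ) :
    condSet ι d ≃ {S : Matrix (ι ⊕ ι) (ι ⊕ ι) (ZMod d) // S.IsSymm} :=
  (mulJJEquiv ι d).subtypeEquiv (fun A => cond_iff_symm ι d A)

def symmEquivSym2 (d : ℕ) :
    {S : Matrix (ι ⊕ ι) (ι ⊕ ι) (ZMod d) // S.IsSymm} ≃ (Sym2 (ι ⊕ ι) → ZMod d) where
  toFun S := fun z => Sym2.lift ⟨fun i j => S.1 i j, fun i j => by
    conv_rhs => rw [← S.2]
    rfl⟩ z
  invFun f := ⟨Matrix.of fun i j => f s(i, j), by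
    ext i j
    simp only [Matrix.transpose_apply, Matrix.of_apply]
    rw [Sym2.eq_swap]⟩
  left_inv S := by ext i j; simp
  right_inv f := by
    funext z
    induction z using Sym2.ind with
    | _ i j => simp

lemma card_condSet (n d : ℕ) :
    Nat.card (condSet (Fin n) d) = d ^ (2 * n ^ 2 + n) := by
  rw [Nat.card_congr ((condEquivSymm (Fin n) d).trans (symmEquivSym2 (Fin n) d))]
  rw [Nat.card_fun, Nat.card_zmod, Nat.card_eq_fintype_card, Sym2.card]
  congr 1
  rw [Fintype.card_sum, Fintype.card_fin]
  rw [Nat.choose_two_right]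
  have h0 : n + n + 1 - 1 = 2 * n := by omega
  have h1 : (n + n + 1) * (2 * n) = 2 * (2 * n ^ 2 + n) := by ring
  rw [h0, h1, Nat.mul_div_cancel_left _ (by norm_num : 0 < 2)]

end count

/-! ### The main bijection and theorem -/

section main
variable {ι : Type} [Fintype ι] [DecidableEq ι] {p m : ℕ}

lemma aux_reduction_one (hp : p.Prime) (hm : 2 ≤ m)
    (C : Matrix (ι ⊕ ι) (ι ⊕ ι) (ZMod (p^m))) :
    (1 + (p : ZMod (p^m))^(m-1) • C).map
        (ZMod.castHom (pow_dvd_pow p (Nat.sub_le m 1)) (ZMod (p ^ (m - 1)))) = 1 := by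
  set ρ := ZMod.castHom (pow_dvd_pow p (Nat.sub_le m 1)) (ZMod (p ^ (m - 1)))
  have hz : ((p : ZMod (p^(m-1))))^(m-1) = 0 := by
    have := ZMod.natCast_self (p^(m-1))
    push_cast at this
    exact this
  ext i j
  simp only [Matrix.map_apply, Matrix.add_apply, Matrix.smul_apply, smul_eq_mul,
    map_add, _root_.map_mul, map_pow, map_natCast, hz, zero_mul, add_zero]
  by_cases h : i = j <;> simp [Matrix.one_apply, h]

theorem stmt_6 (p m n : ℕ) (hp : p.Prime) (hm : 2 ≤ m) (hn : 1 ≤ n) :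
    Nat.card {M : Matrix (Fin n ⊕ Fin n) (Fin n ⊕ Fin n) (ZMod (p ^ m)) //
        M ∈ SpSet (Fin n) (p ^ m) ∧
        M.map (ZMod.castHom (pow_dvd_pow p (Nat.sub_le m 1)) (ZMod (p ^ (m - 1)))) = 1} =
      p ^ (2 * n ^ 2 + n) := by
  haveI : NeZero p := ⟨hp.pos.ne'⟩
  set π := ZMod.castHom (dvd_pow_self p (by omega : m ≠ 0)) (ZMod p) with hπdef
  set s : ZMod (p^m) := (p : ZMod (p^m))^(m-1) with hsdef
  have hmapw : ∀ A : Matrix (Fin n ⊕ Fin n) (Fin n ⊕ Fin n) (ZMod p),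
      (A.map (fun a => ((a.val : ℕ) : ZMod (p^m)))).map π = A := by
    intro A
    ext i j
    simp only [Matrix.map_apply]
    exact aux_pi_w hp hm (A i j)
  set F : condSet (Fin n) p → {M : Matrix (Fin n ⊕ Fin n) (Fin n ⊕ Fin n) (ZMod (p ^ m)) //
      M ∈ SpSet (Fin n) (p ^ m) ∧
      M.map (ZMod.castHom (pow_dvd_pow p (Nat.sub_le m 1)) (ZMod (p ^ (m - 1)))) = 1} :=
    fun A => ⟨1 + s • ((A.1).map (fun a => ((a.val : ℕ) : ZMod (p^m)))), by
      constructor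
      · rw [aux_sympl_iff hp hm, hmapw]
        exact A.2
      · exact aux_reduction_one hp hm _⟩ with hFdef
  have hinj : Function.Injective F := by
    intro A A' h
    have h2 : (1 : Matrix (Fin n ⊕ Fin n) (Fin n ⊕ Fin n) (ZMod (p ^ m)))
          + s • ((A.1).map (fun a => ((a.val : ℕ) : ZMod (p^m))))
        = 1 + s • ((A'.1).map (fun a => ((a.val : ℕ) : ZMod (p^m)))) := congrArg Subtype.val h
    apply Subtype.ext
    ext i j
    have h3 : s * (((A.1 i j).val : ℕ) : ZMod (p^m)) = s * (((A'.1 i j).val : ℕ) : ZMod (p^m)) := by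
      have := congrFun (congrFun h2 i) j
      simpa only [Matrix.add_apply, Matrix.smul_apply, Matrix.map_apply, smul_eq_mul,
        add_right_inj] using this
    have h4 := (aux_Kiff hp hm _ _).mp h3
    rw [aux_pi_w hp hm, aux_pi_w hp hm] at h4
    exact h4
  have hsurj : Function.Surjective F := by
    rintro ⟨M, hsp, hred⟩
    have hent : ∀ i j, (ZMod.castHom (pow_dvd_pow p (Nat.sub_le m 1))
        (ZMod (p ^ (m - 1)))) ((M - 1) i j) = 0 := by
      intro i j
      have h1 : (ZMod.castHom (pow_dvd_pow p (Nat.sub_le m 1)) (ZMod (p ^ (m - 1))))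
          (M i j) = (1 : Matrix (Fin n ⊕ Fin n) (Fin n ⊕ Fin n) (ZMod (p ^ (m-1)))) i j := by
        rw [← hred]; rfl
      rw [Matrix.sub_apply, map_sub, h1]
      by_cases h : i = j
      · subst h; rw [Matrix.one_apply_eq, Matrix.one_apply_eq, _root_.map_one, sub_self]
      · rw [Matrix.one_apply_ne h, Matrix.one_apply_ne h, map_zero, sub_zero]
    choose C hC using fun i j => aux_L3 hp hm _ (hent i j)
    have hM : M = 1 + s • Matrix.of C := by
      ext i j
      have h5 := hC i j
      rw [Matrix.sub_apply] at h5
      simp only [Matrix.add_apply, Matrix.smul_apply, Matrix.of_apply, smul_eq_mul]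
      linear_combination h5
    refine ⟨⟨(Matrix.of C).map π, ?_⟩, ?_⟩
    · exact (aux_sympl_iff hp hm _).mp (hM ▸ hsp)
    · apply Subtype.ext
      show 1 + s • (((Matrix.of C).map π).map (fun a => ((a.val : ℕ) : ZMod (p^m)))) = M
      rw [hM]
      congr 1
      ext i j
      simp only [Matrix.smul_apply, Matrix.map_apply, Matrix.of_apply, smul_eq_mul]
      exact aux_L1 hp hm (C i j)
  rw [← Nat.card_eq_of_bijective F ⟨hinj, hsurj⟩]
  exact card_condSet n p
end main
end

section
/- For every prime number p and all integers n ≥ 1 and 0 ≤ k < n, the real number ζ_p(n,k) = ∏_{j=0}^{n−k−1} (1 − p^{−2(n−j)}) / (1 − p^{−(n−k−j)}) satisfies 1 ≤ ζ_p(n,k) < e^{1.57}. -/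
/-- `ζ_p(n,k) = ∏_{j=0}^{n-k-1} (1 − p^{−2(n−j)}) / (1 − p^{−(n−k−j)})` as a real number. -/
noncomputable def zeta (p n k : ℕ) : ℝ :=
  ∏ j ∈ Finset.range (n - k),
    (1 - (p : ℝ) ^ (-(2 * ((n : ℤ) - j)))) / (1 - (p : ℝ) ^ (-((n : ℤ) - k - j)))

private lemma pow_half_bound {p : ℝ} (hp : 2 ≤ p) (t : ℕ) : p ^ (-(t:ℤ)) ≤ (1/2:ℝ)^t := by
  rw [zpow_neg, zpow_natCast, one_div, inv_pow]
  gcongr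

theorem stmt_12 (p n k : ℕ) (hp : p.Prime) (hn : 1 ≤ n) (hk : k < n) :
    1 ≤ zeta p n k ∧ zeta p n k < Real.exp 1.57 := by
  have hp2 : (2:ℝ) ≤ (p:ℝ) := by exact_mod_cast hp.two_le
  have hp1 : (1:ℝ) ≤ (p:ℝ) := by linarith
  have hp0 : (0:ℝ) < (p:ℝ) := by linarith
  -- basic facts about each factor
  have hfac : ∀ j, j < n - k →
      0 < 1 - (p : ℝ) ^ (-((n : ℤ) - k - j)) ∧
      (p : ℝ) ^ (-(2 * ((n : ℤ) - j))) ≤ (p : ℝ) ^ (-((n : ℤ) - k - j)) ∧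
      0 < (p : ℝ) ^ (-(2 * ((n : ℤ) - j))) ∧
      (p : ℝ) ^ (-((n : ℤ) - k - j)) ≤ (1/2:ℝ) ^ (n - k - j) := by
    intro j hj
    have hcast : -((n : ℤ) - k - j) = -(((n - k - j : ℕ)) : ℤ) := by push_cast; omega
    have hxb : (p : ℝ) ^ (-((n : ℤ) - k - j)) ≤ (1/2:ℝ) ^ (n - k - j) := by
      rw [hcast]; exact pow_half_bound hp2 _
    have hxhalf : (1/2:ℝ) ^ (n - k - j) ≤ 1/2 := by
      have h1 : 1 ≤ n - k - j := by omega
      calc (1/2:ℝ) ^ (n - k - j) ≤ (1/2:ℝ)^1 := by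
            apply pow_le_pow_of_le_one (by norm_num) (by norm_num) h1
        _ = 1/2 := by norm_num
    refine ⟨by linarith, ?_, zpow_pos hp0 _, hxb⟩
    exact zpow_le_zpow_right₀ hp1 (by omega)
  constructor
  · unfold zeta
    have := Finset.prod_le_prod (s := Finset.range (n - k))
      (f := fun _ => (1:ℝ))
      (g := fun (j : ℕ) => (1 - (p : ℝ) ^ (-(2 * ((n : ℤ) - j)))) / (1 - (p : ℝ) ^ (-((n : ℤ) - k - j))))
      (fun i _ => zero_le_one)
      (fun j hj => by
        rw [Finset.mem_range] at hj
        obtain ⟨h1, h2, h3, h4⟩ := hfac j hj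
        beta_reduce
        rw [le_div_iff₀ h1]
        linarith)
    simpa using this
  · obtain ⟨s, hm⟩ : ∃ s, n - k = s + 1 := ⟨n - k - 1, by omega⟩
    unfold zeta
    rw [hm, Finset.prod_range_succ]
    have hA : ∏ j ∈ Finset.range s,
        (1 - (p : ℝ) ^ (-(2 * ((n : ℤ) - j)))) / (1 - (p : ℝ) ^ (-((n : ℤ) - k - j)))
        ≤ Real.exp (2/3) := by
      have step : ∏ j ∈ Finset.range s,
          (1 - (p : ℝ) ^ (-(2 * ((n : ℤ) - j)))) / (1 - (p : ℝ) ^ (-((n : ℤ) - k - j)))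
          ≤ ∏ j ∈ Finset.range s, Real.exp ((4/3) * (1/2:ℝ)^(s + 1 - j)) := by
        apply Finset.prod_le_prod
        · intro j hj
          rw [Finset.mem_range] at hj
          obtain ⟨h1, h2, h3, h4⟩ := hfac j (by omega)
          have h5 : (1/2:ℝ) ^ (n - k - j) ≤ 1 := pow_le_one₀ (by norm_num) (by norm_num)
          apply div_nonneg (by linarith) h1.le
        · intro j hj
          rw [Finset.mem_range] at hj
          obtain ⟨h1, h2, h3, h4⟩ := hfac j (by omega)
          set x := (p : ℝ) ^ (-((n : ℤ) - k - j)) with hxdef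
          have hnkj : n - k - j = s + 1 - j := by omega
          have hx4 : x ≤ 1/4 := by
            rw [hxdef]
            calc (p : ℝ) ^ (-((n : ℤ) - k - j)) ≤ (1/2:ℝ) ^ (n - k - j) := h4
              _ ≤ (1/2:ℝ)^2 := by
                  apply pow_le_pow_of_le_one (by norm_num) (by norm_num) (by omega)
              _ = 1/4 := by norm_num
          have hxpos : 0 < x := by positivity
          have key : (1 - (p : ℝ) ^ (-(2 * ((n : ℤ) - j)))) / (1 - x) ≤ 1 + (4/3) * x := by
            rw [div_le_iff₀ h1]
            nlinarith
          calc (1 - (p : ℝ) ^ (-(2 * ((n : ℤ) - j)))) / (1 - x)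
              ≤ 1 + (4/3) * x := key
            _ ≤ 1 + (4/3) * (1/2:ℝ)^(s + 1 - j) := by
                have := h4; rw [hnkj] at this; nlinarith
            _ ≤ Real.exp ((4/3) * (1/2:ℝ)^(s + 1 - j)) := by
                have := Real.add_one_le_exp ((4/3) * (1/2:ℝ)^(s + 1 - j)); linarith
      rw [← Real.exp_sum] at step
      refine step.trans (Real.exp_le_exp.mpr ?_)
      have hre : ∑ j ∈ Finset.range s, (4/3) * (1/2:ℝ)^(s + 1 - j)
          = ∑ i ∈ Finset.range s, (4/3) * (1/2:ℝ)^(i + 2) := by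
        rw [← Finset.sum_range_reflect]
        apply Finset.sum_congr rfl
        intro i hi
        rw [Finset.mem_range] at hi
        congr 2
        omega
      rw [hre]
      have : ∑ i ∈ Finset.range s, (4/3) * (1/2:ℝ)^(i + 2)
          = (1/3) * ∑ i ∈ Finset.range s, (1/2:ℝ)^i := by
        rw [Finset.mul_sum]
        apply Finset.sum_congr rfl
        intro i _
        ring
      rw [this]
      have hgeom : ∑ i ∈ Finset.range s, (1/2:ℝ)^i ≤ 2 := by
        have := geom_sum_eq (by norm_num : (1/2:ℝ) ≠ 1) s
        rw [this]
        have : (0:ℝ) ≤ (1/2:ℝ)^s := by positivity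
        rw [div_le_iff_of_neg (by norm_num : (1/2:ℝ) - 1 < 0)]
        linarith
      linarith
    have hB : (1 - (p : ℝ) ^ (-(2 * ((n : ℤ) - s)))) / (1 - (p : ℝ) ^ (-((n : ℤ) - k - s)))
        ≤ 2 := by
      obtain ⟨h1, h2, h3, h4⟩ := hfac s (by omega)
      have hxhalf : (p : ℝ) ^ (-((n : ℤ) - k - s)) ≤ 1/2 := by
        calc (p : ℝ) ^ (-((n : ℤ) - k - s)) ≤ (1/2:ℝ) ^ (n - k - s) := h4
          _ ≤ (1/2:ℝ)^1 :=
              pow_le_pow_of_le_one (by norm_num) (by norm_num) (by omega)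
          _ = 1/2 := by norm_num
      rw [div_le_iff₀ h1]
      nlinarith
    have hBpos : 0 ≤ (1 - (p : ℝ) ^ (-(2 * ((n : ℤ) - s)))) / (1 - (p : ℝ) ^ (-((n : ℤ) - k - s))) := by
      obtain ⟨h1, h2, h3, h4⟩ := hfac s (by omega)
      have h5 : (1/2:ℝ) ^ (n - k - s) ≤ 1 := pow_le_one₀ (by norm_num) (by norm_num)
      apply div_nonneg (by linarith) h1.le
    have hApos : 0 ≤ ∏ j ∈ Finset.range s,
        (1 - (p : ℝ) ^ (-(2 * ((n : ℤ) - j)))) / (1 - (p : ℝ) ^ (-((n : ℤ) - k - j))) := by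
      apply Finset.prod_nonneg
      intro j hj
      rw [Finset.mem_range] at hj
      obtain ⟨h1, h2, h3, h4⟩ := hfac j (by omega)
      have h5 : (1/2:ℝ) ^ (n - k - j) ≤ 1 := pow_le_one₀ (by norm_num) (by norm_num)
      apply div_nonneg (by linarith) h1.le
    calc _ ≤ Real.exp (2/3) * 2 := mul_le_mul hA hB hBpos (Real.exp_pos _).le
      _ = Real.exp (2/3 + Real.log 2) := by
          rw [Real.exp_add, Real.exp_log (by norm_num)]
      _ < Real.exp 1.57 := by
          rw [Real.exp_lt_exp]
          have := Real.log_two_lt_d9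
          norm_num at this ⊢
          linarith
end

section
/- Let d ≥ 2, n ≥ 1 and 1 ≤ m ≤ n be integers, and let a₁, …, a_m be vectors in (Z_d)ⁿ that are linearly independent, i.e., the only coefficients x₁, …, x_m ∈ Z_d with x₁a₁ + ⋯ + x_m a_m = 0 are x₁ = ⋯ = x_m = 0. Then there exists an invertible n×n matrix over Z_d whose first m columns are a₁, …, a_m; in particular the family a₁, …, a_m extends to a family of n linearly independent vectors in (Z_d)ⁿ. -/
/-!
Lift the `aᵢ` to `ℤⁿ`. The Smith normal form of the lattice spanned by the lifts gives
`P ∈ GLₙ(ℤ)` sending every lift into the span of at most `m` coordinate vectors `eᵢ`, `i ∈ I`.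
Reduced mod `d`, the vectors `P aᵢ` are still independent and supported on `I`, so together
with the `e_c`, `c ∉ I` (after enlarging `I` to exactly `m` elements), they form `n` independent
vectors; applying `P⁻¹` yields the extension. Over the finite ring `Z_d`, `n` independent columns
make an invertible matrix, because an injective self-map of a finite set is surjective.
-/

open Matrix

section Extension

variable {R ι κ : Type*} [CommRing R] [DecidableEq ι]

theorem LinearIndependent.sumElim_single_compl {a : κ → ι → R} (ha : LinearIndependent R a)
    {I : Finset ι} (hI : ∀ k, ∀ i ∉ I, a k i = 0) :
    LinearIndependent R (Sum.elim a fun c : {i // i ∉ I} => (Pi.single (c : ι) 1 : ι → R)) := by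
  have hsingle : LinearIndependent R fun c : {i // i ∉ I} => (Pi.single (c : ι) 1 : ι → R) :=
    (Pi.linearIndependent_single_one ι R).comp Subtype.val Subtype.val_injective
  refine ha.sum_type hsingle <|
    (LinearMap.disjoint_single_single R (fun _ => R) (I : Set ι) (I : Set ι)ᶜ
      disjoint_compl_right).mono ?_ ?_
  · rw [Submodule.span_le, Set.range_subset_iff]
    intro k
    refine LinearMap.iInf_ker_proj_le_iSup_range_single R (fun _ => R) I.finite_toSet
      isCompl_compl.codisjoint ?_
    simp only [Submodule.mem_iInf, LinearMap.mem_ker, LinearMap.proj_apply]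
    exact hI k
  · rw [Submodule.span_le, Set.range_subset_iff]
    intro c
    exact Submodule.mem_iSup_of_mem (c : ι)
      (Submodule.mem_iSup_of_mem c.2 (LinearMap.mem_range_self _ 1))

theorem LinearIndependent.sumElim_inv_mulVec_single_compl [Fintype ι] {a : κ → ι → R}
    (ha : LinearIndependent R a) {P : Matrix ι ι R} (hP : IsUnit P) {I : Finset ι}
    (hI : ∀ k, ∀ i ∉ I, (P *ᵥ a k) i = 0) :
    LinearIndependent R (Sum.elim a fun c : {i // i ∉ I} => P⁻¹ *ᵥ Pi.single (c : ι) 1) := by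
  have hPa : LinearIndependent R fun k => P *ᵥ a k :=
    ha.map' P.mulVecLin (LinearMap.ker_eq_bot.mpr (mulVec_injective_of_isUnit hP))
  have hfam : (Sum.elim a fun c : {i // i ∉ I} => P⁻¹ *ᵥ Pi.single (c : ι) 1) =
      P⁻¹.mulVecLin ∘
        Sum.elim (fun k => P *ᵥ a k) fun c : {i // i ∉ I} => Pi.single (c : ι) 1 := by
    ext (k | c) : 1
    · simp [mulVec_mulVec, nonsing_inv_mul _ ((isUnit_iff_isUnit_det P).mp hP)]
    · simp
  rw [hfam]
  exact (hPa.sumElim_single_compl hI).map' P⁻¹.mulVecLin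
    (LinearMap.ker_eq_bot.mpr (mulVec_injective_of_isUnit (isUnit_nonsing_inv_iff.mpr hP)))

theorem Matrix.isUnit_of_linearIndependent_col [Fintype ι] [Finite R] {A : Matrix ι ι R}
    (h : LinearIndependent R A.col) : IsUnit A :=
  mulVec_surjective_iff_isUnit.mp (Finite.injective_iff_surjective.mp (mulVec_injective_iff.mpr h))

end Extension

theorem Function.Embedding.exists_equiv_sum_apply_eq_inl {κ ι τ : Type*} [Fintype κ]
    [Fintype ι] [Fintype τ] (j : κ ↪ ι) (h : Fintype.card κ + Fintype.card τ = Fintype.card ι) :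
    ∃ e : ι ≃ κ ⊕ τ, ∀ k, e (j k) = Sum.inl k := by
  classical
  have σ : ↥(Set.range j)ᶜ ≃ τ := Fintype.equivOfCardEq <| by
    rw [Fintype.card_compl_set, Set.card_range_of_injective j.injective]
    omega
  refine ⟨(Equiv.Set.sumCompl _).symm.trans
    (Equiv.sumCongr (Equiv.ofInjective j j.injective).symm σ), fun k => ?_⟩
  simp [Equiv.Set.sumCompl_symm_apply_of_mem (Set.mem_range_self k)]

section ZMod

variable {κ ι : Type*} [Fintype κ] [Fintype ι] [DecidableEq ι] {d : ℕ}

theorem ZMod.exists_isUnit_mulVec_eq_zero_off (a : κ → ι → ZMod d) :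
    ∃ P : Matrix ι ι (ZMod d), IsUnit P ∧
      ∃ I : Finset ι, I.card ≤ Fintype.card κ ∧ ∀ k, ∀ i ∉ I, (P *ᵥ a k) i = 0 := by
  set v : κ → ι → ℤ := fun k i => (a k i).cast
  obtain ⟨r, S⟩ := Submodule.smithNormalForm (Pi.basisFun ℤ ι) (Submodule.span ℤ (Set.range v))
  set P₀ := S.bM.toMatrix (Pi.basisFun ℤ ι)
  have hP₀ : ∀ x, P₀ *ᵥ x = S.bM.repr x := (Pi.basisFun ℤ ι).toMatrix_mulVec_repr S.bM
  refine ⟨P₀.map (Int.castRingHom _), ?_, Finset.univ.map S.f, ?_, fun k i hi => ?_⟩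
  · have := S.bM.invertibleToMatrix (Pi.basisFun ℤ ι)
    exact (isUnit_of_invertible P₀).map (Int.castRingHom (ZMod d)).mapMatrix
  · rw [Finset.card_map, Finset.card_univ, ← Module.finrank_eq_card_basis S.bN]
    exact finrank_range_le_card v
  · have hv : Int.castRingHom (ZMod d) ∘ v k = a k := funext fun i => ZMod.intCast_zmod_cast _
    rw [← hv, ← RingHom.map_mulVec, hP₀,
      S.repr_eq_zero_of_notMem_range ⟨v k, Submodule.subset_span ⟨k, rfl⟩⟩ (by simpa using hi),
      map_zero]

theorem ZMod.exists_linearIndependent_extend {a : κ → ι → ZMod d}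
    (ha : LinearIndependent (ZMod d) a) (j : κ ↪ ι) :
    ∃ b : ι → ι → ZMod d, LinearIndependent (ZMod d) b ∧ ∀ k, b (j k) = a k := by
  obtain ⟨P, hP, I, hIcard, hI⟩ := ZMod.exists_isUnit_mulVec_eq_zero_off a
  obtain ⟨J, hIJ, hJ⟩ := Finset.exists_superset_card_eq hIcard (Fintype.card_le_of_embedding j)
  obtain ⟨e, he⟩ := j.exists_equiv_sum_apply_eq_inl (τ := {i // i ∉ J}) <| by
    rw [Fintype.card_subtype_compl, Fintype.card_coe, hJ]
    have := Fintype.card_le_of_embedding j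
    omega
  have hb := ha.sumElim_inv_mulVec_single_compl hP fun k i hi => hI k i fun h => hi (hIJ h)
  exact ⟨_ ∘ e, hb.comp e e.injective, fun k => by simp [he]⟩

end ZMod

theorem stmt_17_general (d n m : ℕ) (hd : 2 ≤ d) (hmn : m ≤ n)
    (a : Fin m → (Fin n → ZMod d))
    (hLI : ∀ x : Fin m → ZMod d, ∑ i, x i • a i = 0 → ∀ i, x i = 0) :
    (∃ B : Matrix (Fin n) (Fin n) (ZMod d), IsUnit B ∧
      ∀ i : Fin m, (fun r => B r (Fin.castLE hmn i)) = a i) ∧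
    ∃ b : Fin n → (Fin n → ZMod d),
      (∀ i : Fin m, b (Fin.castLE hmn i) = a i) ∧
      (∀ x : Fin n → ZMod d, ∑ i, x i • b i = 0 → ∀ i, x i = 0) := by
  have : NeZero d := ⟨by omega⟩
  have ha : LinearIndependent (ZMod d) a := Fintype.linearIndependent_iff.mpr hLI
  obtain ⟨b, hb, hba⟩ := ZMod.exists_linearIndependent_extend ha (Fin.castLEEmb hmn)
  refine ⟨⟨(Matrix.of b)ᵀ, Matrix.isUnit_of_linearIndependent_col hb, hba⟩, b, hba, ?_⟩
  exact Fintype.linearIndependent_iff.mp hb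

theorem stmt_17 (d n m : ℕ) (hd : 2 ≤ d) (hn : 1 ≤ n) (hm : 1 ≤ m) (hmn : m ≤ n)
    (a : Fin m → (Fin n → ZMod d))
    (hLI : ∀ x : Fin m → ZMod d, ∑ i, x i • a i = 0 → ∀ i, x i = 0) :
    (∃ B : Matrix (Fin n) (Fin n) (ZMod d), IsUnit B ∧
      ∀ i : Fin m, (fun r => B r (Fin.castLE hmn i)) = a i) ∧
    ∃ b : Fin n → (Fin n → ZMod d),
      (∀ i : Fin m, b (Fin.castLE hmn i) = a i) ∧
      (∀ x : Fin n → ZMod d, ∑ i, x i • b i = 0 → ∀ i, x i = 0) :=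
  stmt_17_general d n m hd hmn a hLI
end

section
/- Let d ≥ 2, n ≥ 1 and 1 ≤ r ≤ 2n be integers, and let a₁, …, a_r be linearly independent vectors in (Z_d)^{2n}, i.e., the only coefficients x₁, …, x_r ∈ Z_d with x₁a₁ + ⋯ + x_r a_r = 0 are x₁ = ⋯ = x_r = 0. Then for every index i ∈ {1, …, r} there exists a vector x ∈ (Z_d)^{2n} such that a_jᵀ Λ x = 1 if j = i and a_jᵀ Λ x = 0 for all j ≠ i. -/
open Matrix

/-!
`ZMod d` is self-injective: its ideals are principal, and if `ann m ⊆ ann c` then `c` is a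
multiple of `m` (lift to `ℤ` and use Bézout for `gcd m d`), so Baer's criterion holds. Hence the
coordinate functional `x ↦ xᵢ` on `(ZMod d)ʳ`, transported along the injective map
`x ↦ ∑ xⱼ aⱼ`, extends to a functional on `(ZMod d)^{2n}`, that is, to `z ↦ z ⬝ᵥ y` for some `y`.
Since `Λ² = -1`, the vector `x = -Λ y` satisfies `aⱼ ⬝ᵥ Λ x = aⱼ ⬝ᵥ y = δᵢⱼ`.
-/

theorem Int.exists_dvd_mul_sub_of_forall_dvd_mul {d M C : ℤ} (hd : d ≠ 0)
    (h : ∀ t, d ∣ t * M → d ∣ t * C) : ∃ e, d ∣ e * M - C := by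
  obtain ⟨M', hM'⟩ := Int.gcd_dvd_left M d
  obtain ⟨t, ht⟩ := Int.gcd_dvd_right M d
  have ht0 : t ≠ 0 := by rintro rfl; exact hd (by rw [ht, mul_zero])
  -- `t = d / gcd M d` kills `M` modulo `d`, and cancelling it shows that `gcd M d` divides `C`.
  obtain ⟨k, hk⟩ : (M.gcd d : ℤ) ∣ C := by
    refine Int.dvd_of_mul_dvd_mul_left ht0 ?_
    rw [mul_comm t, ← ht]
    exact h t ⟨M', by linear_combination t * hM' - M' * ht⟩
  exact ⟨M.gcdA d * k, -(M.gcdB d * k), by rw [hk, Int.gcd_eq_gcd_ab]; ring⟩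

theorem ZMod.mem_span_singleton_of_forall_mul_eq_zero {d : ℕ} [NeZero d] {m c : ZMod d}
    (h : ∀ t, t * m = 0 → t * c = 0) : c ∈ Ideal.span {m} := by
  obtain ⟨M, rfl⟩ := ZMod.intCast_surjective m
  obtain ⟨C, rfl⟩ := ZMod.intCast_surjective c
  have hd : (d : ℤ) ≠ 0 := by exact_mod_cast NeZero.ne d
  have cast_eq_zero (x : ℤ) : (x : ZMod d) = 0 ↔ (d : ℤ) ∣ x :=
    ZMod.intCast_zmod_eq_zero_iff_dvd x d
  obtain ⟨e, he⟩ := Int.exists_dvd_mul_sub_of_forall_dvd_mul hd fun t htM =>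
    (cast_eq_zero _).mp <| by push_cast; exact h t (by exact_mod_cast (cast_eq_zero _).mpr htM)
  refine Ideal.mem_span_singleton'.mpr ⟨e, ?_⟩
  rw [← sub_eq_zero]
  exact_mod_cast (cast_eq_zero _).mpr he

theorem ZMod.baer (d : ℕ) [NeZero d] : Module.Baer (ZMod d) (ZMod d) := by
  intro I g
  have := IsPrincipalIdealRing.of_surjective (Int.castRingHom (ZMod d)) ZMod.intCast_surjective
  obtain ⟨m, rfl⟩ := (IsPrincipalIdealRing.principal I).principal
  have hm : m ∈ Ideal.span {m} := Ideal.mem_span_singleton_self m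
  obtain ⟨e, he⟩ := Ideal.mem_span_singleton'.mp <|
    ZMod.mem_span_singleton_of_forall_mul_eq_zero (m := m) (c := g ⟨m, hm⟩) fun t ht => by
      rw [← smul_eq_mul, ← map_smul]
      convert map_zero g
      exact Subtype.ext ht
  refine ⟨LinearMap.mulLeft (ZMod d) e, fun x hx => ?_⟩
  obtain ⟨t, rfl⟩ := Ideal.mem_span_singleton'.mp hx
  have : (⟨t * m, hx⟩ : Ideal.span {m}) = t • ⟨m, hm⟩ := rfl
  rw [this, map_smul, ← he, LinearMap.mulLeft_apply, smul_eq_mul]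
  ring

instance ZMod.injective_self (d : ℕ) [NeZero d] : Module.Injective (ZMod d) (ZMod d) :=
  (ZMod.baer d).injective

theorem LinearIndependent.exists_linearMap_apply_eq_ite {R M ι : Type*} [Ring R]
    [Module.Injective R R] [AddCommGroup M] [Module R M] [Fintype ι] [DecidableEq ι]
    {v : ι → M} (hv : LinearIndependent R v) (i : ι) :
    ∃ φ : M →ₗ[R] R, ∀ j, φ (v j) = if j = i then 1 else 0 := by
  obtain ⟨φ, hφ⟩ := Module.Injective.extension_property R R (ι → R) M _
    hv.fintypeLinearCombination_injective (LinearMap.proj i)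
  refine ⟨φ, fun j => ?_⟩
  simpa [Pi.single_apply, eq_comm (a := i)] using LinearMap.congr_fun hφ (Pi.single j 1)

theorem LinearIndependent.exists_dotProduct_eq_ite {R κ ι : Type*} [CommRing R]
    [Module.Injective R R] [Fintype κ] [DecidableEq κ] [Fintype ι] [DecidableEq ι]
    {v : ι → κ → R} (hv : LinearIndependent R v) (i : ι) :
    ∃ y : κ → R, ∀ j, v j ⬝ᵥ y = if j = i then 1 else 0 := by
  obtain ⟨φ, hφ⟩ := hv.exists_linearMap_apply_eq_ite i
  refine ⟨fun k => φ (Pi.single k 1), fun j => ?_⟩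
  rw [← hφ, LinearMap.pi_apply_eq_sum_univ φ (v j)]
  refine Finset.sum_congr rfl fun k _ => ?_
  simp only [smul_eq_mul, eq_comm (a := k)]
  congr 2
  exact funext (Pi.single_apply k 1)

theorem JJ_mul_self (ι : Type) [Fintype ι] [DecidableEq ι] (d : ℕ) :
    JJ ι d * JJ ι d = -1 := by
  simp [JJ, Matrix.fromBlocks_multiply, ← Matrix.fromBlocks_one, Matrix.fromBlocks_neg]

theorem stmt_18_general (d n r : ℕ) (hd : 2 ≤ d)
    (a : Fin r → (Fin n ⊕ Fin n → ZMod d))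
    (hLI : ∀ x : Fin r → ZMod d, ∑ i, x i • a i = 0 → ∀ i, x i = 0) :
    ∀ i : Fin r, ∃ x : Fin n ⊕ Fin n → ZMod d,
      ∀ j : Fin r, a j ⬝ᵥ (JJ (Fin n) d).mulVec x = if j = i then 1 else 0 := by
  intro i
  have : NeZero d := ⟨by omega⟩
  obtain ⟨y, hy⟩ := (Fintype.linearIndependent_iff.mpr hLI).exists_dotProduct_eq_ite i
  refine ⟨-(JJ (Fin n) d *ᵥ y), fun j => ?_⟩
  rw [Matrix.mulVec_neg, Matrix.mulVec_mulVec, JJ_mul_self, Matrix.neg_mulVec, neg_neg,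
    Matrix.one_mulVec, hy]

theorem stmt_18 (d n r : ℕ) (hd : 2 ≤ d) (hn : 1 ≤ n) (hr1 : 1 ≤ r) (hr2 : r ≤ 2 * n)
    (a : Fin r → (Fin n ⊕ Fin n → ZMod d))
    (hLI : ∀ x : Fin r → ZMod d, ∑ i, x i • a i = 0 → ∀ i, x i = 0) :
    ∀ i : Fin r, ∃ x : Fin n ⊕ Fin n → ZMod d,
      ∀ j : Fin r, a j ⬝ᵥ (JJ (Fin n) d).mulVec x = if j = i then 1 else 0 :=
  stmt_18_general d n r hd a hLI
end

section
/- Let d ≥ 2, n ≥ 1 and 0 ≤ k < n be integers, and let a₁, …, a_{n−k} be linearly independent vectors in (Z_d)^{2n} (i.e., the only coefficients x₁, …, x_{n−k} ∈ Z_d with x₁a₁ + ⋯ + x_{n−k}a_{n−k} = 0 are all zero) which are pairwise symplectically orthogonal: a_iᵀ Λ a_j = 0 for all i, j ∈ {1, …, n−k}. Then there exists a matrix M ∈ Sp(2n, Z_d) such that for every j ∈ {1, …, n−k} the (n+j)-th column of M equals a_j. -/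
open Matrix

namespace SympExt

open Finset

variable {n : ℕ}

section Form
variable {R : Type*} [CommRing R]

/-- the symplectic form -/
def sf (x y : Fin n ⊕ Fin n → R) : R :=
  ∑ i, (x (.inl i) * y (.inr i) - x (.inr i) * y (.inl i))

lemma sf_self (x : Fin n ⊕ Fin n → R) : sf x x = 0 := by
  simp [sf, mul_comm]

lemma sf_antisymm (x y : Fin n ⊕ Fin n → R) : sf x y = - sf y x := by
  rw [sf, sf, ← Finset.sum_neg_distrib]
  exact Finset.sum_congr rfl fun i _ => by ring

lemma sf_add_left (x x' y : Fin n ⊕ Fin n → R) : sf (x + x') y = sf x y + sf x' y := by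
  rw [sf, sf, sf, ← Finset.sum_add_distrib]
  exact Finset.sum_congr rfl fun i _ => by simp; ring

lemma sf_add_right (x y y' : Fin n ⊕ Fin n → R) : sf x (y + y') = sf x y + sf x y' := by
  rw [sf, sf, sf, ← Finset.sum_add_distrib]
  exact Finset.sum_congr rfl fun i _ => by simp; ring

lemma sf_smul_left (c : R) (x y : Fin n ⊕ Fin n → R) : sf (c • x) y = c * sf x y := by
  rw [sf, sf, Finset.mul_sum]
  exact Finset.sum_congr rfl fun i _ => by simp; ring

lemma sf_smul_right (c : R) (x y : Fin n ⊕ Fin n → R) : sf x (c • y) = c * sf x y := by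
  rw [sf, sf, Finset.mul_sum]
  exact Finset.sum_congr rfl fun i _ => by simp; ring

lemma sf_sub_left (x x' y : Fin n ⊕ Fin n → R) : sf (x - x') y = sf x y - sf x' y := by
  rw [sf, sf, sf, ← Finset.sum_sub_distrib]
  exact Finset.sum_congr rfl fun i _ => by simp; ring

lemma sf_sub_right (x y y' : Fin n ⊕ Fin n → R) : sf x (y - y') = sf x y - sf x y' := by
  rw [sf, sf, sf, ← Finset.sum_sub_distrib]
  exact Finset.sum_congr rfl fun i _ => by simp; ring

lemma sf_zero_right (x : Fin n ⊕ Fin n → R) : sf x 0 = 0 := by simp [sf]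

lemma sf_sum_left {ι : Type*} (s : Finset ι) (f : ι → (Fin n ⊕ Fin n → R)) (y) :
    sf (∑ i ∈ s, f i) y = ∑ i ∈ s, sf (f i) y := by
  classical
  induction s using Finset.induction with
  | empty => simp [sf]
  | insert _ _ h ih => rw [Finset.sum_insert h, Finset.sum_insert h, sf_add_left, ih]

lemma sf_sum_right {ι : Type*} (s : Finset ι) (x) (f : ι → (Fin n ⊕ Fin n → R)) :
    sf x (∑ i ∈ s, f i) = ∑ i ∈ s, sf x (f i) := by
  classical
  induction s using Finset.induction with
  | empty => simp [sf]
  | insert _ _ h ih => rw [Finset.sum_insert h, Finset.sum_insert h, sf_add_right, ih]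

lemma sf_single_inr (x : Fin n ⊕ Fin n → R) (i : Fin n) :
    sf x (Pi.single (Sum.inr i) 1) = x (.inl i) := by
  simp [sf, Pi.single_apply, Finset.sum_ite_eq, mul_ite]

lemma sf_single_inl (x : Fin n ⊕ Fin n → R) (i : Fin n) :
    sf x (Pi.single (Sum.inl i) 1) = - x (.inr i) := by
  simp [sf, Pi.single_apply, Finset.sum_ite_eq, mul_ite]

lemma sf_nondeg (x : Fin n ⊕ Fin n → R) (h : ∀ y, sf x y = 0) : x = 0 := by
  funext j
  cases j with
  | inl i => rw [← sf_single_inr x i, h]; rfl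
  | inr i => have := h (Pi.single (Sum.inl i) 1); rw [sf_single_inl] at this
             simpa [neg_eq_zero] using this

lemma sf_map' {S : Type*} [CommRing S] (f : R →+* S) (x y : Fin n ⊕ Fin n → R) :
    sf (fun s => f (x s)) (fun s => f (y s)) = f (sf x y) := by
  simp [sf, map_sum]

lemma sf_map {S : Type*} [CommRing S] (f : R →+* S) (x y : Fin n ⊕ Fin n → R) :
    sf (f ∘ x) (f ∘ y) = f (sf x y) := by
  simp [sf, map_sum]

lemma sf_eq_dot (x y : Fin n ⊕ Fin n → R) :
    x ⬝ᵥ (Matrix.fromBlocks 0 1 (-1) 0 : Matrix (Fin n ⊕ Fin n) (Fin n ⊕ Fin n) R) *ᵥ y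
      = sf x y := by
  rw [sf]
  simp [dotProduct, Fintype.sum_sum_type, mulVec, dotProduct, fromBlocks,
    one_apply, mul_ite]
  ring

end Form


section ZModAux

variable {d : ℕ}

/-- lift an element of `ZMod p` to `ZMod d` via its `val`. -/
def lft (d : ℕ) {p : ℕ} (x : ZMod p) : ZMod d := (x.val : ZMod d)

lemma red_lft {p : ℕ} [NeZero p] (hpd : p ∣ d) (x : ZMod p) :
    ZMod.castHom hpd (ZMod p) (lft d x) = x := by
  rw [lft, map_natCast]
  exact ZMod.natCast_rightInverse x

lemma red_natCast {p : ℕ} (hpd : p ∣ d) (N : ℕ) :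
    ZMod.castHom hpd (ZMod p) (N : ZMod d) = (N : ZMod p) := map_natCast _ N

lemma red_eq_zero_iff {p : ℕ} [NeZero d] (hpd : p ∣ d) (x : ZMod d) :
    ZMod.castHom hpd (ZMod p) x = 0 ↔ p ∣ x.val := by
  have hx : ((x.val : ℕ) : ZMod d) = x := ZMod.natCast_rightInverse x
  conv_lhs => rw [← hx]
  rw [map_natCast]
  exact ZMod.natCast_eq_zero_iff _ _

/-- unit criterion in `ZMod d` -/
lemma isUnit_of_red_ne_zero [NeZero d] (x : ZMod d)
    (h : ∀ p : ℕ, p.Prime → (hp : p ∣ d) → ZMod.castHom hp (ZMod p) x ≠ 0) :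
    IsUnit x := by
  have hx : ((x.val : ℕ) : ZMod d) = x := ZMod.natCast_rightInverse x
  rw [← hx, ZMod.isUnit_iff_coprime]
  by_contra hc
  obtain ⟨p, hp, hpdvd⟩ := Nat.exists_prime_and_dvd hc
  have hpd : p ∣ d := hpdvd.trans (Nat.gcd_dvd_right _ _)
  have hpx : p ∣ x.val := hpdvd.trans (Nat.gcd_dvd_left _ _)
  exact h p hp hpd ((red_eq_zero_iff hpd x).2 hpx)

/-- `(d/p) * x = 0` in `ZMod d` implies `p ∣ x.val`. -/
lemma dvd_val_of_mul_quot_eq_zero [NeZero d] {p : ℕ} (hpd : p ∣ d) (hp : p ≠ 0) (x : ZMod d)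
    (h : ((d / p : ℕ) : ZMod d) * x = 0) : p ∣ x.val := by
  have hx : ((x.val : ℕ) : ZMod d) = x := ZMod.natCast_rightInverse x
  rw [← hx, ← Nat.cast_mul, ZMod.natCast_eq_zero_iff] at h
  have h' : d / p * p ∣ d / p * x.val := by rw [Nat.div_mul_cancel hpd]; exact h
  have hq : d / p ≠ 0 := by
    intro h0
    have := Nat.div_mul_cancel hpd
    rw [h0] at this
    exact (NeZero.ne d) (by omega)
  exact (mul_dvd_mul_iff_left hq).1 h'

/-- `p ∣ x.val` implies `x = p * y` in `ZMod d`. -/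
lemma eq_mul_of_dvd_val {p : ℕ} [NeZero d] (x : ZMod d) (h : p ∣ x.val) :
    ∃ y : ZMod d, x = (p : ZMod d) * y := by
  refine ⟨((x.val / p : ℕ) : ZMod d), ?_⟩
  rw [← Nat.cast_mul, Nat.mul_div_cancel' h]
  exact (ZMod.natCast_rightInverse x).symm

end ZModAux


section Radical

lemma radical_dvd_of_forall {d : ℕ} (x : ℕ) (h : ∀ p ∈ d.primeFactors, p ∣ x) :
    (∏ p ∈ d.primeFactors, p) ∣ x :=
  Finset.prod_primes_dvd x (fun p hp => (Nat.prime_of_mem_primeFactors hp).prime) h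

lemma dvd_radical_pow {d : ℕ} (hd : d ≠ 0) : d ∣ (∏ p ∈ d.primeFactors, p) ^ d := by
  conv_lhs => rw [← Nat.factorization_prod_pow_eq_self hd]
  rw [Finsupp.prod, Nat.support_factorization, ← Finset.prod_pow]
  exact Finset.prod_dvd_prod_of_dvd _ _ fun p hp => pow_dvd_pow p (Nat.factorization_lt p hd).le

end Radical

section FieldLemmas

variable {F : Type*} [Field F]

lemma exists_dual_field {ι : Type*} [Fintype ι] [DecidableEq ι] {m : ℕ}
    (A : Fin m → ι → F) (hLI : ∀ x : Fin m → F, ∑ i, x i • A i = 0 → ∀ i, x i = 0) :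
    ∃ Y : Fin m → ι → F, ∀ i j, A i ⬝ᵥ Y j = if i = j then (1 : F) else 0 := by
  let f : (Fin m → F) →ₗ[F] (ι → F) :=
    { toFun := fun x => ∑ i, x i • A i
      map_add' := by
        intro x y
        rw [← Finset.sum_add_distrib]
        exact Finset.sum_congr rfl fun i _ => by simp [add_smul]
      map_smul' := by
        intro c x
        show (∑ i, (c • x) i • A i) = c • ∑ i, x i • A i
        rw [Finset.smul_sum]
        exact Finset.sum_congr rfl fun i _ => by simp [smul_smul] }
  have hker : LinearMap.ker f = ⊥ := by
    rw [LinearMap.ker_eq_bot']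
    intro x hx
    funext i
    exact hLI x hx i
  obtain ⟨g, hg⟩ := f.exists_leftInverse_of_injective hker
  have hgf : ∀ x, g (f x) = x := fun x => by
    have := LinearMap.ext_iff.1 hg x
    simpa using this
  have hfA : ∀ i, f (Pi.single i 1) = A i := by
    intro i
    have h0 : f (Pi.single i 1) = ∑ i', (Pi.single i (1:F) : Fin m → F) i' • A i' := rfl
    rw [h0, Finset.sum_eq_single i (fun b _ hb => by simp [Pi.single_apply, hb])
      (fun h => absurd (Finset.mem_univ i) h)]
    simp
  refine ⟨fun j s => g (Pi.single s 1) j, fun i j => ?_⟩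
  have e1 : A i = ∑ s, A i s • (Pi.single s 1 : ι → F) := by
    funext t
    rw [Finset.sum_apply, Finset.sum_eq_single t
      (fun b _ hb => by simp [Pi.single_apply, Ne.symm hb])
      (fun h => absurd (Finset.mem_univ t) h)]
    simp
  have e2 : g (A i) = ∑ s, A i s • g (Pi.single s 1) := by
    conv_lhs => rw [e1]
    rw [map_sum]
    exact Finset.sum_congr rfl fun s _ => map_smul g _ _
  have key : A i ⬝ᵥ (fun s => g (Pi.single s 1) j) = g (A i) j := by
    rw [e2, Finset.sum_apply, dotProduct]
    exact Finset.sum_congr rfl fun s _ => by simp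
  rw [key, ← hfA i, hgf]
  simp [Pi.single_apply, eq_comm]

lemma exists_common_kernel [Fintype F] [DecidableEq F] {n m : ℕ} (hm : m < n)
    (hF : 2 ≤ Fintype.card F)
    (A B : Fin m → (Fin n ⊕ Fin n → F)) :
    ∃ w : Fin n ⊕ Fin n → F, w ≠ 0 ∧ ∀ i, sf (A i) w = 0 ∧ sf (B i) w = 0 := by
  by_contra hcon
  push_neg at hcon
  have key : ∀ w : Fin n ⊕ Fin n → F, (∀ i, sf (A i) w = 0 ∧ sf (B i) w = 0) → w = 0 := by
    intro w hw
    by_contra hw0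
    obtain ⟨i, hi⟩ := hcon w hw0
    exact hi (hw i).1 (hw i).2
  set Φ : (Fin n ⊕ Fin n → F) → (Fin m ⊕ Fin m → F) :=
    fun v => Sum.elim (fun i => sf (A i) v) (fun i => sf (B i) v) with hΦ
  have hinj : Function.Injective Φ := by
    intro v v' hvv
    have hz : ∀ i, sf (A i) (v - v') = 0 ∧ sf (B i) (v - v') = 0 := by
      intro i
      constructor
      · rw [sf_sub_right]
        have := congrFun hvv (Sum.inl i)
        simpa [hΦ] using sub_eq_zero_of_eq this
      · rw [sf_sub_right]
        have := congrFun hvv (Sum.inr i)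
        simpa [hΦ] using sub_eq_zero_of_eq this
    have := key _ hz
    exact sub_eq_zero.1 this
  have hcard := Fintype.card_le_of_injective Φ hinj
  rw [Fintype.card_fun, Fintype.card_fun] at hcard
  simp only [Fintype.card_sum, Fintype.card_fin] at hcard
  have := (Nat.pow_le_pow_iff_right (by omega : 1 < Fintype.card F)).1 hcard
  omega

lemma exists_sf_ne_zero {w : Fin n ⊕ Fin n → F} (hw : w ≠ 0) :
    ∃ z, sf w z ≠ 0 := by
  by_contra hz
  push_neg at hz
  exact hw (sf_nondeg w hz)

end FieldLemmas


section DualZMod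

variable {d n : ℕ}

lemma dot_sum_right {ι κ : Type*} [Fintype κ] {R : Type*} [CommRing R]
    (s : Finset ι) (v : κ → R) (f : ι → κ → R) :
    v ⬝ᵥ (∑ i ∈ s, f i) = ∑ i ∈ s, v ⬝ᵥ f i := by
  simp only [dotProduct, Finset.sum_apply, Finset.mul_sum]
  rw [Finset.sum_comm]

lemma li_mod_p [NeZero d] {m : ℕ} {p : ℕ} (hpd : p ∣ d) (hp0 : p ≠ 0)
    (a : Fin m → (Fin n ⊕ Fin n → ZMod d))
    (hLI : ∀ x : Fin m → ZMod d, ∑ i, x i • a i = 0 → ∀ i, x i = 0) :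
    ∀ x : Fin m → ZMod p,
      (∑ i, x i • fun s => ZMod.castHom hpd (ZMod p) (a i s)) = 0 → ∀ i, x i = 0 := by
  haveI : NeZero p := ⟨hp0⟩
  intro xb hxb i
  set red := ZMod.castHom hpd (ZMod p) with hred
  set x : Fin m → ZMod d := fun i => lft d (xb i) with hx
  set z : Fin n ⊕ Fin n → ZMod d := ∑ i, x i • a i with hz
  have hzred : ∀ s, red (z s) = 0 := by
    intro s
    have hz' : z s = ∑ i', x i' * a i' s := by
      rw [hz, Finset.sum_apply]
      exact Finset.sum_congr rfl fun i' _ => rfl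
    have hxb' : ∑ i', xb i' * red (a i' s) = 0 := by
      have := congrFun hxb s
      simpa using this
    rw [hz', map_sum, ← hxb']
    refine Finset.sum_congr rfl fun i' _ => ?_
    rw [_root_.map_mul, hx]
    simp only
    rw [red_lft]
  have hdvd : ∀ s, p ∣ (z s).val := fun s => (red_eq_zero_iff hpd (z s)).1 (hzred s)
  choose w hw using fun s => eq_mul_of_dvd_val (z s) (hdvd s)
  have hzw : z = (p : ZMod d) • w := by funext s; rw [hw s]; rfl
  have hkill : ∑ i, (((d / p : ℕ) : ZMod d) * x i) • a i = 0 := by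
    have h1 : ∑ i, (((d / p : ℕ) : ZMod d) * x i) • a i = ((d / p : ℕ) : ZMod d) • z := by
      rw [hz, Finset.smul_sum]
      exact Finset.sum_congr rfl fun i _ => by rw [smul_smul]
    rw [h1, hzw, smul_smul, ← Nat.cast_mul, Nat.div_mul_cancel hpd, ZMod.natCast_self,
      zero_smul]
  have h2 := hLI _ hkill i
  have h3 : p ∣ (x i).val := dvd_val_of_mul_quot_eq_zero hpd hp0 (x i) h2
  have h4 : red (x i) = 0 := (red_eq_zero_iff hpd (x i)).2 h3
  rw [hx] at h4
  simp only at h4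
  rw [← red_lft hpd (xb i)]
  exact h4

/-- CRT coefficients -/
noncomputable def lam (d p : ℕ) : ZMod d :=
  ((ordCompl[p] d : ℕ) : ZMod d) * lft d (((ordCompl[p] d : ℕ) : ZMod p)⁻¹)

lemma red_lam_self [NeZero d] {p : ℕ} (hp : p.Prime) (hpd : p ∣ d) :
    ZMod.castHom hpd (ZMod p) (lam d p) = 1 := by
  haveI : Fact p.Prime := ⟨hp⟩
  haveI : NeZero p := ⟨hp.ne_zero⟩
  rw [lam, _root_.map_mul, red_natCast, red_lft]
  have hne : ((ordCompl[p] d : ℕ) : ZMod p) ≠ 0 := by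
    rw [Ne, ZMod.natCast_eq_zero_iff]
    exact Nat.not_dvd_ordCompl hp (NeZero.ne d)
  exact mul_inv_cancel₀ hne

lemma red_lam_other [NeZero d] {p q : ℕ} (hp : p.Prime) (hq : q.Prime) (hpd : p ∣ d)
    (hne : q ≠ p) : ZMod.castHom hpd (ZMod p) (lam d q) = 0 := by
  rw [lam, _root_.map_mul, red_natCast]
  have hdvd : p ∣ ordCompl[q] d := by
    have hrec : ordProj[q] d * ordCompl[q] d = d := Nat.ordProj_mul_ordCompl_eq_self d q
    have hpdd : p ∣ ordProj[q] d * ordCompl[q] d := by rw [hrec]; exact hpd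
    rcases (Nat.Prime.dvd_mul hp).1 hpdd with h | h
    · exfalso
      have := hp.dvd_of_dvd_pow h
      exact hne ((Nat.prime_dvd_prime_iff_eq hp hq).1 this).symm
    · exact h
  rw [(ZMod.natCast_eq_zero_iff _ _).2 hdvd, zero_mul]

lemma exists_dual_zmod (hd2 : 2 ≤ d) {m : ℕ}
    (a : Fin m → (Fin n ⊕ Fin n → ZMod d))
    (hLI : ∀ x : Fin m → ZMod d, ∑ i, x i • a i = 0 → ∀ i, x i = 0) :
    ∃ y : Fin m → (Fin n ⊕ Fin n → ZMod d),
      ∀ i j, a i ⬝ᵥ y j = if i = j then (1 : ZMod d) else 0 := by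
  haveI : NeZero d := ⟨by omega⟩
  -- mod-p dual families
  have key : ∀ p : ℕ, ∃ yp : Fin m → (Fin n ⊕ Fin n → ZMod d),
      ∀ (hp : p.Prime) (hpd : p ∣ d), ∀ i j,
        ZMod.castHom hpd (ZMod p) (a i ⬝ᵥ yp j) = if i = j then 1 else 0 := by
    intro p
    by_cases hcase : p.Prime ∧ p ∣ d
    · obtain ⟨hp, hpd⟩ := hcase
      haveI : Fact p.Prime := ⟨hp⟩
      set red := ZMod.castHom hpd (ZMod p) with hred
      set ab : Fin m → (Fin n ⊕ Fin n → ZMod p) := fun i s => red (a i s) with hab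
      have hli := li_mod_p hpd hp.ne_zero a hLI
      obtain ⟨Yb, hYb⟩ := exists_dual_field ab hli
      refine ⟨fun j s => lft d (Yb j s), fun hp' hpd' i j => ?_⟩
      have : ZMod.castHom hpd' (ZMod p) (a i ⬝ᵥ fun s => lft d (Yb j s))
          = ab i ⬝ᵥ Yb j := by
        rw [RingHom.map_dotProduct]
        congr 1
        funext s
        exact red_lft hpd' (Yb j s)
      rw [this, hYb]
    · exact ⟨fun _ _ => 0, fun hp hpd => absurd ⟨hp, hpd⟩ hcase⟩
  choose Y hY using key
  set y0 : Fin m → (Fin n ⊕ Fin n → ZMod d) :=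
    fun j => ∑ p ∈ d.primeFactors, lam d p • Y p j with hy0
  -- reduction of the Gram entries
  have hred_gram : ∀ (p : ℕ) (hp : p ∈ d.primeFactors) (i j : Fin m),
      ZMod.castHom (Nat.dvd_of_mem_primeFactors hp) (ZMod p)
        (a i ⬝ᵥ y0 j - (if i = j then 1 else 0)) = 0 := by
    intro p hp i j
    have hpp : p.Prime := Nat.prime_of_mem_primeFactors hp
    have hpd : p ∣ d := Nat.dvd_of_mem_primeFactors hp
    set red := ZMod.castHom hpd (ZMod p) with hred
    have h1 : a i ⬝ᵥ y0 j = ∑ q ∈ d.primeFactors, lam d q * (a i ⬝ᵥ Y q j) := by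
      rw [hy0, dot_sum_right]
      exact Finset.sum_congr rfl fun q _ => by rw [dotProduct_smul]; rfl
    rw [map_sub, h1, map_sum]
    have h2 : ∀ q ∈ d.primeFactors, q ≠ p →
        red (lam d q * (a i ⬝ᵥ Y q j)) = 0 := by
      intro q hq hqp
      rw [_root_.map_mul, red_lam_other hpp (Nat.prime_of_mem_primeFactors hq) hpd hqp,
        zero_mul]
    rw [Finset.sum_eq_single p h2 (fun h => absurd hp h), _root_.map_mul,
      red_lam_self hpp hpd, one_mul, hY p hpp hpd i j]
    simp [apply_ite red]
  -- the Gram matrix is 1 + nilpotent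
  set Em : Matrix (Fin m) (Fin m) (ZMod d) :=
    Matrix.of fun i j => a i ⬝ᵥ y0 j - (if i = j then 1 else 0) with hEm
  have hnil : IsNilpotent Em := by
    have hdvdval : ∀ i j, (∏ p ∈ d.primeFactors, p) ∣ (Em i j).val := by
      intro i j
      refine radical_dvd_of_forall _ fun p hp => ?_
      exact (red_eq_zero_iff (Nat.dvd_of_mem_primeFactors hp) _).1 (hred_gram p hp i j)
    choose Fm hFm using fun i => fun j => eq_mul_of_dvd_val (Em i j) (hdvdval i j)
    have hsmul : Em = (((∏ p ∈ d.primeFactors, p : ℕ) : ZMod d)) • Matrix.of Fm := by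
      ext i j
      rw [hFm i j]
      rfl
    refine ⟨d, ?_⟩
    rw [hsmul, smul_pow, ← Nat.cast_pow,
      (ZMod.natCast_eq_zero_iff _ _).2 (dvd_radical_pow (NeZero.ne d)), zero_smul]
  have hu : IsUnit ((1 : Matrix (Fin m) (Fin m) (ZMod d)) + Em) :=
    IsNilpotent.isUnit_one_add hnil
  set Hm : Matrix (Fin m) (Fin m) (ZMod d) := ↑hu.unit⁻¹ with hHm
  have hmulinv : ((1 : Matrix (Fin m) (Fin m) (ZMod d)) + Em) * Hm = 1 := hu.mul_val_inv
  refine ⟨fun j => ∑ l, Hm l j • y0 l, fun i j => ?_⟩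
  have h3 : a i ⬝ᵥ (∑ l, Hm l j • y0 l) = ∑ l, Hm l j * (a i ⬝ᵥ y0 l) := by
    rw [dot_sum_right]
    exact Finset.sum_congr rfl fun l _ => by rw [dotProduct_smul]; rfl
  have h4 : ∀ l, a i ⬝ᵥ y0 l = ((1 : Matrix (Fin m) (Fin m) (ZMod d)) + Em) i l := by
    intro l
    rw [Matrix.add_apply, hEm]
    simp [Matrix.one_apply]
  rw [h3]
  have h5 : ∑ l, Hm l j * (a i ⬝ᵥ y0 l)
      = (((1 : Matrix (Fin m) (Fin m) (ZMod d)) + Em) * Hm) i j := by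
    rw [Matrix.mul_apply]
    exact Finset.sum_congr rfl fun l _ => by rw [h4 l, mul_comm]
  rw [h5, hmulinv, Matrix.one_apply]

end DualZMod


section PS

variable {d n : ℕ}

/-- partial symplectic system -/
def isPS {R : Type*} [CommRing R] {m : ℕ} (A B : Fin m → (Fin n ⊕ Fin n → R)) : Prop :=
  (∀ i j, sf (A i) (A j) = 0) ∧ (∀ i j, sf (B i) (B j) = 0) ∧
    (∀ i j, sf (B i) (A j) = if i = j then (1 : R) else 0)

lemma sum_mul_delta {m : ℕ} {R : Type*} [CommRing R] (f : Fin m → R) (j : Fin m) :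
    ∑ i, f i * (if i = j then (1:R) else 0) = f j := by
  simp [mul_ite]

lemma sum_mul_delta' {m : ℕ} {R : Type*} [CommRing R] (f : Fin m → R) (j : Fin m) :
    ∑ i, f i * (if j = i then (1:R) else 0) = f j := by
  simp [mul_ite]

lemma step1 (hd2 : 2 ≤ d) {m : ℕ} (a : Fin m → (Fin n ⊕ Fin n → ZMod d))
    (hLI : ∀ x : Fin m → ZMod d, ∑ i, x i • a i = 0 → ∀ i, x i = 0)
    (hortho : ∀ i j, sf (a i) (a j) = 0) :
    ∃ b : Fin m → (Fin n ⊕ Fin n → ZMod d), isPS a b := by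
  obtain ⟨y, hy⟩ := exists_dual_zmod hd2 a hLI
  set b0 : Fin m → (Fin n ⊕ Fin n → ZMod d) :=
    fun j => Sum.elim (fun i => y j (Sum.inr i)) (fun i => - y j (Sum.inl i)) with hb0
  have hb0x : ∀ j x, sf (b0 j) x = y j ⬝ᵥ x := by
    intro j x
    rw [sf, dotProduct, Fintype.sum_sum_type, ← Finset.sum_add_distrib]
    refine Finset.sum_congr rfl fun i _ => ?_
    rw [hb0]
    simp only [Sum.elim_inl, Sum.elim_inr]
    ring
  have hb0a : ∀ j i, sf (b0 j) (a i) = if j = i then 1 else 0 := by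
    intro j i
    rw [hb0x, dotProduct_comm, hy i j]
    by_cases h : i = j
    · simp [h]
    · simp [h, Ne.symm h]
  set c : Fin m → Fin m → ZMod d := fun j l => if j < l then sf (b0 j) (b0 l) else 0 with hc
  set S : Fin m → (Fin n ⊕ Fin n → ZMod d) := fun j => ∑ l, c j l • a l with hS
  set b : Fin m → (Fin n ⊕ Fin n → ZMod d) := fun j => b0 j + S j with hb
  have hSa : ∀ j i, sf (S j) (a i) = 0 := by
    intro j i
    rw [hS]
    simp only
    rw [sf_sum_left]
    exact Finset.sum_eq_zero fun l _ => by rw [sf_smul_left, hortho, mul_zero]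
  have hba : ∀ j i, sf (b j) (a i) = if j = i then 1 else 0 := by
    intro j i
    rw [hb]
    simp only
    rw [sf_add_left, hSa, add_zero, hb0a]
  have hb0S : ∀ j l, sf (b0 j) (S l) = c l j := by
    intro j l
    rw [hS]
    simp only
    rw [sf_sum_right]
    have : ∀ l', sf (b0 j) (c l l' • a l') = c l l' * (if j = l' then 1 else 0) := by
      intro l'
      rw [sf_smul_right, hb0a]
    simp only [this]
    rw [show (∑ l', c l l' * (if j = l' then 1 else 0)) = c l j from sum_mul_delta' _ j]
  have hSb0 : ∀ j l, sf (S j) (b0 l) = - c j l := by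
    intro j l
    rw [sf_antisymm, hb0S]
  have hSS : ∀ j l, sf (S j) (S l) = 0 := by
    intro j l
    rw [hS]
    simp only
    rw [sf_sum_left]
    refine Finset.sum_eq_zero fun l' _ => ?_
    rw [sf_smul_left, sf_sum_right]
    rw [Finset.sum_eq_zero fun m' _ => by rw [sf_smul_right, hortho, mul_zero], mul_zero]
  have hbb : ∀ j l, sf (b j) (b l) = 0 := by
    intro j l
    rw [hb]
    simp only
    rw [sf_add_left, sf_add_right, sf_add_right, hb0S, hSS, hSb0, add_zero]
    have hcc : sf (b0 j) (b0 l) + c l j + (- c j l) = 0 := by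
      rcases lt_trichotomy j l with h | h | h
      · rw [hc]
        simp only
        rw [if_pos h, if_neg (asymm h)]
        ring
      · subst h
        rw [hc]
        simp only
        rw [if_neg (lt_irrefl j), sf_self]
        ring
      · rw [hc]
        simp only
        rw [if_neg (asymm h), if_pos h, sf_antisymm (b0 l) (b0 j)]
        ring
    linear_combination hcc
  exact ⟨b, hortho, hbb, hba⟩

end PS


section Step2

variable {d n : ℕ}

/-- the projection onto the symplectic complement of a partial system -/
def Pmap {R : Type*} [CommRing R] {m : ℕ} (A B : Fin m → (Fin n ⊕ Fin n → R))
    (v : Fin n ⊕ Fin n → R) : Fin n ⊕ Fin n → R :=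
  v - (∑ i, sf (B i) v • A i) + ∑ i, sf (A i) v • B i

lemma Pmap_apply {R : Type*} [CommRing R] {m : ℕ} (A B : Fin m → (Fin n ⊕ Fin n → R))
    (v : Fin n ⊕ Fin n → R) (s : Fin n ⊕ Fin n) :
    Pmap A B v s = v s - ∑ i, sf (B i) v * A i s + ∑ i, sf (A i) v * B i s := by
  rw [Pmap]
  simp [Finset.sum_apply]

lemma sf_Pmap {R : Type*} [CommRing R] {m : ℕ} (A B : Fin m → (Fin n ⊕ Fin n → R))
    (x v : Fin n ⊕ Fin n → R) :
    sf x (Pmap A B v)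
      = sf x v - ∑ i, sf (B i) v * sf x (A i) + ∑ i, sf (A i) v * sf x (B i) := by
  rw [Pmap, sf_add_right, sf_sub_right, sf_sum_right, sf_sum_right]
  congr 2
  · exact Finset.sum_congr rfl fun i _ => by rw [sf_smul_right]
  · funext i
    rw [sf_smul_right]

lemma red_Pmap {R S : Type*} [CommRing R] [CommRing S] (f : R →+* S) {m : ℕ}
    (A B : Fin m → (Fin n ⊕ Fin n → R)) (v : Fin n ⊕ Fin n → R) :
    (fun s => f (Pmap A B v s))
      = Pmap (fun i s => f (A i s)) (fun i s => f (B i s)) (fun s => f (v s)) := by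
  funext s
  rw [Pmap_apply, Pmap_apply, map_add, map_sub, map_sum, map_sum]
  congr 2
  · exact Finset.sum_congr rfl fun i _ => by rw [_root_.map_mul, ← sf_map' f (B i) v]
  · funext i
    rw [_root_.map_mul, ← sf_map' f (A i) v]

lemma Pmap_fixed {R : Type*} [CommRing R] {m : ℕ} (A B : Fin m → (Fin n ⊕ Fin n → R))
    (w : Fin n ⊕ Fin n → R) (hA : ∀ i, sf (A i) w = 0) (hB : ∀ i, sf (B i) w = 0) :
    Pmap A B w = w := by
  rw [Pmap, Finset.sum_eq_zero fun i _ => by rw [hB, zero_smul],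
    Finset.sum_eq_zero fun i _ => by rw [hA, zero_smul], sub_zero, add_zero]

lemma step2 (hd2 : 2 ≤ d) {m : ℕ} (hmn : m < n)
    (A B : Fin m → (Fin n ⊕ Fin n → ZMod d)) (hPS : isPS A B) :
    ∃ a' b' : Fin n ⊕ Fin n → ZMod d, isPS (Fin.snoc A a') (Fin.snoc B b') := by
  haveI : NeZero d := ⟨by omega⟩
  obtain ⟨hAA, hBB, hBA⟩ := hPS
  -- orthogonality of the image of Pmap
  have h1 : ∀ (j : Fin m) v, sf (A j) (Pmap A B v) = 0 := by
    intro j v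
    rw [sf_Pmap]
    have e1 : ∑ i, sf (B i) v * sf (A j) (A i) = 0 :=
      Finset.sum_eq_zero fun i _ => by rw [hAA, mul_zero]
    have e2 : ∑ i, sf (A i) v * sf (A j) (B i) = - sf (A j) v := by
      have hterm : ∀ i, sf (A i) v * sf (A j) (B i)
          = - (sf (A i) v * (if i = j then 1 else 0)) := by
        intro i
        rw [sf_antisymm (A j) (B i), hBA, mul_neg]
      simp only [hterm]
      rw [Finset.sum_neg_distrib, sum_mul_delta]
    rw [e1, e2]
    ring
  have h2 : ∀ (j : Fin m) v, sf (B j) (Pmap A B v) = 0 := by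
    intro j v
    rw [sf_Pmap]
    have e1 : ∑ i, sf (B i) v * sf (B j) (A i) = sf (B j) v := by
      have hterm : ∀ i, sf (B i) v * sf (B j) (A i)
          = sf (B i) v * (if j = i then 1 else 0) := fun i => by rw [hBA]
      simp only [hterm]
      exact sum_mul_delta' _ j
    have e2 : ∑ i, sf (A i) v * sf (B j) (B i) = 0 :=
      Finset.sum_eq_zero fun i _ => by rw [hBB, mul_zero]
    rw [e1, e2]
    ring
  -- for each prime p ∣ d find a good pair of vectors
  have key : ∀ p : ℕ, ∃ up vp : Fin n ⊕ Fin n → ZMod d,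
      ∀ (hpd : p ∣ d), p.Prime →
        ZMod.castHom hpd (ZMod p) (sf (Pmap A B up) (Pmap A B vp)) ≠ 0 := by
    intro p
    by_cases hcase : p.Prime ∧ p ∣ d
    · obtain ⟨hp, hpd⟩ := hcase
      haveI : Fact p.Prime := ⟨hp⟩
      haveI : NeZero p := ⟨hp.ne_zero⟩
      set red := ZMod.castHom hpd (ZMod p) with hred
      obtain ⟨Ab, hAb⟩ : ∃ Ab, Ab = fun (i : Fin m) s => red (A i s) := ⟨_, rfl⟩
      obtain ⟨Bb, hBb⟩ : ∃ Bb, Bb = fun (i : Fin m) s => red (B i s) := ⟨_, rfl⟩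
      have hcard : 2 ≤ Fintype.card (ZMod p) := by rw [ZMod.card]; exact hp.two_le
      obtain ⟨w, hw0, hwk⟩ := exists_common_kernel hmn hcard Ab Bb
      obtain ⟨z, hz⟩ := exists_sf_ne_zero hw0
      refine ⟨fun s => lft d (w s), fun s => lft d (z s), fun hpd' hp' => ?_⟩
      show red (sf (Pmap A B fun s => lft d (w s)) (Pmap A B fun s => lft d (z s))) ≠ 0
      rw [← sf_map' red]
      have hwred : (fun s => red (lft d (w s))) = w := by
        funext s; exact red_lft hpd (w s)
      have hzred : (fun s => red (lft d (z s))) = z := by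
        funext s; exact red_lft hpd (z s)
      rw [red_Pmap red A B, red_Pmap red A B, ← hAb, ← hBb, hwred, hzred]
      rw [Pmap_fixed Ab Bb w (fun i => (hwk i).1) (fun i => (hwk i).2)]
      rw [sf_Pmap]
      have e1 : ∑ i, sf (Bb i) z * sf w (Ab i) = 0 :=
        Finset.sum_eq_zero fun i _ => by
          rw [sf_antisymm w (Ab i), (hwk i).1, neg_zero, mul_zero]
      have e2 : ∑ i, sf (Ab i) z * sf w (Bb i) = 0 :=
        Finset.sum_eq_zero fun i _ => by
          rw [sf_antisymm w (Bb i), (hwk i).2, neg_zero, mul_zero]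
      rw [e1, e2, sub_zero, add_zero]
      exact hz
    · exact ⟨0, 0, fun hpd hp => absurd ⟨hp, hpd⟩ hcase⟩
  choose U W hUW using key
  set u : Fin n ⊕ Fin n → ZMod d := ∑ p ∈ d.primeFactors, lam d p • U p with hu
  set v : Fin n ⊕ Fin n → ZMod d := ∑ p ∈ d.primeFactors, lam d p • W p with hv
  -- reductions of u and v agree with those of U p and W p
  have hured : ∀ (p : ℕ) (hp : p ∈ d.primeFactors) (x : Fin n ⊕ Fin n → ZMod d)
      (X : ℕ → Fin n ⊕ Fin n → ZMod d), x = ∑ q ∈ d.primeFactors, lam d q • X q →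
      ∀ s, ZMod.castHom (Nat.dvd_of_mem_primeFactors hp) (ZMod p) (x s)
        = ZMod.castHom (Nat.dvd_of_mem_primeFactors hp) (ZMod p) (X p s) := by
    intro p hp x X hx s
    have hpp := Nat.prime_of_mem_primeFactors hp
    have hpd := Nat.dvd_of_mem_primeFactors hp
    rw [hx]
    rw [Finset.sum_apply, map_sum]
    rw [Finset.sum_eq_single p
      (fun q hq hqp => by
        rw [Pi.smul_apply, smul_eq_mul, _root_.map_mul,
          red_lam_other hpp (Nat.prime_of_mem_primeFactors hq) hpd hqp, zero_mul])
      (fun h => absurd hp h)]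
    rw [Pi.smul_apply, smul_eq_mul, _root_.map_mul, red_lam_self hpp hpd, one_mul]
  have hunit : IsUnit (sf (Pmap A B u) (Pmap A B v)) := by
    refine isUnit_of_red_ne_zero _ fun p hp hpd => ?_
    have hpmem : p ∈ d.primeFactors := Nat.mem_primeFactors.2 ⟨hp, hpd, NeZero.ne d⟩
    set red := ZMod.castHom hpd (ZMod p) with hred
    have hru : (fun s => red (u s)) = fun s => red (U p s) := by
      funext s; exact hured p hpmem u U hu s
    have hrv : (fun s => red (v s)) = fun s => red (W p s) := by
      funext s; exact hured p hpmem v W hv s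
    have lhs : red (sf (Pmap A B u) (Pmap A B v))
        = red (sf (Pmap A B (U p)) (Pmap A B (W p))) := by
      rw [← sf_map' red, ← sf_map' red, red_Pmap red A B u, red_Pmap red A B v,
        red_Pmap red A B (U p), red_Pmap red A B (W p), hru, hrv]
    rw [lhs]
    exact hUW p hpd hp
  -- build the new pair
  set c := hunit.unit with hc
  set a' := Pmap A B u with ha'
  set b' := (-(↑c⁻¹ : ZMod d)) • Pmap A B v with hb'
  refine ⟨a', b', ?_, ?_, ?_⟩
  · intro i j
    refine Fin.lastCases ?_ ?_ i
    · refine Fin.lastCases ?_ ?_ j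
      · rw [Fin.snoc_last, sf_self]
      · intro j'
        rw [Fin.snoc_last, Fin.snoc_castSucc, ha', sf_antisymm, h1, neg_zero]
    · intro i'
      refine Fin.lastCases ?_ ?_ j
      · rw [Fin.snoc_last, Fin.snoc_castSucc, ha']
        exact h1 i' u
      · intro j'
        rw [Fin.snoc_castSucc, Fin.snoc_castSucc]
        exact hAA i' j'
  · intro i j
    refine Fin.lastCases ?_ ?_ i
    · refine Fin.lastCases ?_ ?_ j
      · rw [Fin.snoc_last, sf_self]
      · intro j'
        rw [Fin.snoc_last, Fin.snoc_castSucc, hb', sf_smul_left, sf_antisymm, h2,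
          neg_zero, mul_zero]
    · intro i'
      refine Fin.lastCases ?_ ?_ j
      · rw [Fin.snoc_last, Fin.snoc_castSucc, hb', sf_smul_right, h2, mul_zero]
      · intro j'
        rw [Fin.snoc_castSucc, Fin.snoc_castSucc]
        exact hBB i' j'
  · intro i j
    refine Fin.lastCases ?_ ?_ i
    · refine Fin.lastCases ?_ ?_ j
      · rw [Fin.snoc_last, Fin.snoc_last, if_pos rfl, hb', ha', sf_smul_left,
          sf_antisymm (Pmap A B v) (Pmap A B u)]
        have hfin : (-(↑c⁻¹ : ZMod d)) * - sf (Pmap A B u) (Pmap A B v) = 1 := by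
          rw [neg_mul_neg]
          exact hunit.val_inv_mul
        rw [hfin]
      · intro j'
        rw [Fin.snoc_last, Fin.snoc_castSucc, hb', sf_smul_left, sf_antisymm, h1,
          neg_zero, mul_zero, if_neg (Fin.castSucc_lt_last j').ne']
    · intro i'
      refine Fin.lastCases ?_ ?_ j
      · rw [Fin.snoc_last, Fin.snoc_castSucc, ha', h2, if_neg (Fin.castSucc_lt_last i').ne]
      · intro j'
        rw [Fin.snoc_castSucc, Fin.snoc_castSucc, hBA]
        by_cases h : i' = j'
        · simp [h]
        · rw [if_neg h, if_neg (fun hh => h (Fin.castSucc_injective _ hh))]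

end Step2


section Main

variable {d n : ℕ}

lemma extend (hd2 : 2 ≤ d) (j : ℕ) : ∀ (m : ℕ) (hm : m + j = n)
    (A B : Fin m → (Fin n ⊕ Fin n → ZMod d)), isPS A B →
    ∃ A' B' : Fin n → (Fin n ⊕ Fin n → ZMod d), isPS A' B' ∧
      ∀ i : Fin m, A' (Fin.castLE (Nat.le.intro hm) i) = A i := by
  induction j with
  | zero =>
    intro m hm A B hPS
    have hmn : m = n := by omega
    subst hmn
    refine ⟨A, B, hPS, fun i => ?_⟩
    have hcast : Fin.castLE (Nat.le.intro hm) i = i := Fin.ext (by simp)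
    rw [hcast]
  | succ j ih =>
    intro m hm A B hPS
    obtain ⟨a', b', hPS'⟩ := step2 hd2 (by omega : m < n) A B hPS
    obtain ⟨A', B', hPS'', hA'⟩ := ih (m + 1) (by omega) _ _ hPS'
    refine ⟨A', B', hPS'', fun i => ?_⟩
    have h1 : Fin.castLE (Nat.le.intro hm) i
        = Fin.castLE (Nat.le.intro (by omega : m + 1 + j = n)) (Fin.castSucc i) :=
      Fin.ext (by simp)
    rw [h1, hA' (Fin.castSucc i)]
    simp

end Main

end SympExt

theorem stmt_19 (d n k : ℕ) (hd : 2 ≤ d) (hn : 1 ≤ n) (hk : k < n)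
    (a : Fin (n - k) → (Fin n ⊕ Fin n → ZMod d))
    (hLI : ∀ x : Fin (n - k) → ZMod d, ∑ i, x i • a i = 0 → ∀ i, x i = 0)
    (hortho : ∀ i j : Fin (n - k), a i ⬝ᵥ (JJ (Fin n) d).mulVec (a j) = 0) :
    ∃ M : Matrix (Fin n ⊕ Fin n) (Fin n ⊕ Fin n) (ZMod d),
      M ∈ SpSet (Fin n) d ∧
      ∀ j : Fin (n - k), (fun i => M i (Sum.inr (Fin.castLE (Nat.sub_le n k) j))) = a j := by
  classical
  have hortho' : ∀ i j, SympExt.sf (a i) (a j) = 0 := by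
    intro i j
    rw [← SympExt.sf_eq_dot]
    exact hortho i j
  obtain ⟨b, hPS⟩ := SympExt.step1 hd a hLI hortho'
  obtain ⟨A', B', hPS', hA'⟩ := SympExt.extend hd k (n - k) (by omega) a b hPS
  obtain ⟨hAA, hBB, hBA⟩ := hPS'
  set M : Matrix (Fin n ⊕ Fin n) (Fin n ⊕ Fin n) (ZMod d) :=
    Matrix.of fun i j => Sum.elim (fun l => B' l i) (fun l => A' l i) j with hM
  have hentry : ∀ u v, (Mᵀ * JJ (Fin n) d * M) u v
      = SympExt.sf (fun i => M i u) (fun i => M i v) := by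
    intro u v
    rw [Matrix.mul_assoc, ← SympExt.sf_eq_dot]
    simp only [Matrix.mul_apply, Matrix.transpose_apply, dotProduct, Matrix.mulVec, JJ]
  refine ⟨M, ?_, ?_⟩
  · show Mᵀ * JJ (Fin n) d * M = JJ (Fin n) d
    ext u v
    rw [hentry u v]
    cases u with
    | inl i =>
      cases v with
      | inl j =>
        show SympExt.sf (B' i) (B' j) = _
        rw [hBB]
        simp [JJ, Matrix.fromBlocks]
      | inr j =>
        show SympExt.sf (B' i) (A' j) = _
        rw [hBA]
        simp [JJ, Matrix.fromBlocks, Matrix.one_apply]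
    | inr i =>
      cases v with
      | inl j =>
        show SympExt.sf (A' i) (B' j) = _
        rw [SympExt.sf_antisymm, hBA]
        simp only [JJ, Matrix.fromBlocks, Matrix.neg_apply, Matrix.one_apply]
        by_cases h : i = j
        · simp [h]
        · simp [h, Ne.symm h, Sum.elim_inr]
      | inr j =>
        show SympExt.sf (A' i) (A' j) = _
        rw [hAA]
        simp [JJ, Matrix.fromBlocks]
  · intro j
    funext i
    exact congrFun (hA' j) i
end
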